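/- arXiv:1405.0986 — 11 statements merged into one kernel-verified Lean document; each statement's English description precedes it below -/
import Mathlib

section
/- Let ρ be a separable bipartite density matrix on ℂ^{dA}⊗ℂ^{dB}, and let A₁, A₂ be dA×dA complex matrices and B₁, B₂ be dB×dB complex matrices. Then |Tr((A₁A₂ ⊗ B₁B₂)ρ)|² ≤ Re Tr((A₁A₁† ⊗ B₂†B₂)ρ) · Re Tr((A₂†A₂ ⊗ B₁B₁†)ρ). (Both traces on the right-hand side are nonnegative reals since the operators are positive semidefinite.) -/
open Matrix
open scoped Kronecker ComplexOrder

noncomputable section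

/-- A density matrix: a positive semidefinite complex matrix of trace 1. -/
def IsDensityMatrix {ι : Type*} [Fintype ι] (ρ : Matrix ι ι ℂ) : Prop :=
  ρ.PosSemidef ∧ ρ.trace = 1

/-- A bipartite state is separable if it is a finite convex combination of Kronecker
products of density matrices on the two factors. -/
def Separable {dA dB : ℕ}
    (ρ : Matrix (Fin dA × Fin dB) (Fin dA × Fin dB) ℂ) : Prop :=
  ∃ (n : ℕ) (p : Fin n → ℝ) (ρA : Fin n → Matrix (Fin dA) (Fin dA) ℂ)
    (ρB : Fin n → Matrix (Fin dB) (Fin dB) ℂ),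
    (∀ k, 0 ≤ p k) ∧ (∑ k, p k = 1) ∧
    (∀ k, IsDensityMatrix (ρA k)) ∧ (∀ k, IsDensityMatrix (ρB k)) ∧
    ρ = ∑ k, (p k : ℂ) • (ρA k ⊗ₖ ρB k)

/-!
For a product state `ρA ⊗ ρB` every trace factorizes into a trace on each factor, and on each
factor Cauchy–Schwarz for the semi-inner product `⟪X, Y⟫ = tr (Y ρ Xᴴ)` gives
`|tr (A₁A₂ρA)|² ≤ tr (A₁A₁†ρA) tr (A₂†A₂ρA)`, and likewise for `B₁, B₂`. These factor traces
are nonnegative reals, so they may be regrouped, which is what allows `B₁B₁†` and `B₂†B₂` to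
change places. A convex combination of product states keeps the bound by the triangle
inequality followed by Cauchy–Schwarz for weighted sums.
-/

namespace Matrix

open RCLike

variable {𝕜 m n : Type*} [RCLike 𝕜] [Fintype m] [Fintype n]

theorem PosSemidef.trace_mul_nonneg {P ρ : Matrix n n 𝕜} (hP : P.PosSemidef)
    (hρ : ρ.PosSemidef) : 0 ≤ (P * ρ).trace := by
  classical
  open MatrixOrder in
  obtain ⟨S, rfl⟩ := CStarAlgebra.nonneg_iff_eq_star_mul_self.mp hρ.nonneg
  rw [star_eq_conjTranspose, ← Matrix.mul_assoc, trace_mul_cycle]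
  exact (hP.mul_mul_conjTranspose_same S).trace_nonneg

theorem PosSemidef.norm_trace_mul_mul_sq_le {ρ : Matrix n n 𝕜} (hρ : ρ.PosSemidef)
    (M N : Matrix n n 𝕜) :
    ‖(M * N * ρ).trace‖ ^ 2 ≤ re (M * Mᴴ * ρ).trace * re (Nᴴ * N * ρ).trace := by
  let := ρ.toMatrixSeminormedAddCommGroup hρ
  let := ρ.toMatrixInnerProductSpace hρ
  have h := inner_mul_inner_self_le (𝕜 := 𝕜) Mᴴ N
  rw [norm_inner_symm N, ← sq] at h
  change ‖(N * ρ * Mᴴᴴ).trace‖ ^ 2 ≤ re (Mᴴ * ρ * Mᴴᴴ).trace * re (N * ρ * Nᴴ).trace at h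
  simpa only [conjTranspose_conjTranspose, trace_mul_cycle _ ρ] using h

theorem norm_trace_kronecker_mul_sq_le {ρA : Matrix m m 𝕜} {ρB : Matrix n n 𝕜}
    (hρA : ρA.PosSemidef) (hρB : ρB.PosSemidef) (A₁ A₂ : Matrix m m 𝕜) (B₁ B₂ : Matrix n n 𝕜) :
    ‖(((A₁ * A₂) ⊗ₖ (B₁ * B₂)) * (ρA ⊗ₖ ρB)).trace‖ ^ 2 ≤
      re (((A₁ * A₁ᴴ) ⊗ₖ (B₂ᴴ * B₂)) * (ρA ⊗ₖ ρB)).trace *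
      re (((A₂ᴴ * A₂) ⊗ₖ (B₁ * B₁ᴴ)) * (ρA ⊗ₖ ρB)).trace := by
  have re_mul {z : 𝕜} (hz : 0 ≤ z) (w : 𝕜) : re (z * w) = re z * re w := by
    obtain ⟨x, -, rfl⟩ := nonneg_iff_exists_ofReal.mp hz
    rw [re_ofReal_mul, ofReal_re]
  simp only [← mul_kronecker_mul, trace_kronecker]
  rw [re_mul ((posSemidef_self_mul_conjTranspose A₁).trace_mul_nonneg hρA),
    re_mul ((posSemidef_conjTranspose_mul_self A₂).trace_mul_nonneg hρA), norm_mul, mul_pow]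
  have hA := hρA.norm_trace_mul_mul_sq_le A₁ A₂
  calc _ ≤ (re (A₁ * A₁ᴴ * ρA).trace * re (A₂ᴴ * A₂ * ρA).trace) *
        (re (B₁ * B₁ᴴ * ρB).trace * re (B₂ᴴ * B₂ * ρB).trace) :=
        mul_le_mul hA (hρB.norm_trace_mul_mul_sq_le B₁ B₂) (sq_nonneg _)
          ((sq_nonneg _).trans hA)
    _ = _ := by ring

end Matrix

theorem norm_sum_smul_sq_le {ι E : Type*} [SeminormedAddCommGroup E] [NormedSpace ℝ E]
    (s : Finset ι) {p a b : ι → ℝ} {c : ι → E} (hp : ∀ i ∈ s, 0 ≤ p i)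
    (ha : ∀ i ∈ s, 0 ≤ a i) (hb : ∀ i ∈ s, 0 ≤ b i) (hc : ∀ i ∈ s, ‖c i‖ ^ 2 ≤ a i * b i) :
    ‖∑ i ∈ s, p i • c i‖ ^ 2 ≤ (∑ i ∈ s, p i * a i) * ∑ i ∈ s, p i * b i := by
  have htriangle : ‖∑ i ∈ s, p i • c i‖ ≤ ∑ i ∈ s, p i * ‖c i‖ :=
    (norm_sum_le _ _).trans_eq <| Finset.sum_congr rfl fun i hi => by
      rw [norm_smul, Real.norm_of_nonneg (hp i hi)]
  calc ‖∑ i ∈ s, p i • c i‖ ^ 2 ≤ (∑ i ∈ s, p i * ‖c i‖) ^ 2 := by gcongr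
    _ ≤ _ := by
      refine Finset.sum_sq_le_sum_mul_sum_of_sq_le_mul s
        (fun i hi => mul_nonneg (hp i hi) (ha i hi)) (fun i hi => mul_nonneg (hp i hi) (hb i hi))
        fun i hi => ?_
      calc (p i * ‖c i‖) ^ 2 = p i ^ 2 * ‖c i‖ ^ 2 := mul_pow ..
        _ ≤ p i ^ 2 * (a i * b i) := by gcongr; exact hc i hi
        _ = p i * a i * (p i * b i) := by ring

theorem separable_cauchy_schwarz_criterion_general {dA dB : ℕ}
    (ρ : Matrix (Fin dA × Fin dB) (Fin dA × Fin dB) ℂ)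
    (hsep : Separable ρ)
    (A₁ A₂ : Matrix (Fin dA) (Fin dA) ℂ) (B₁ B₂ : Matrix (Fin dB) (Fin dB) ℂ) :
    ‖(((A₁ * A₂) ⊗ₖ (B₁ * B₂)) * ρ).trace‖ ^ 2 ≤
      ((((A₁ * A₁ᴴ) ⊗ₖ (B₂ᴴ * B₂)) * ρ).trace).re *
      ((((A₂ᴴ * A₂) ⊗ₖ (B₁ * B₁ᴴ)) * ρ).trace).re := by
  obtain ⟨n, p, ρA, ρB, hp, -, hρA, hρB, rfl⟩ := hsep
  have re_nonneg {P : Matrix (Fin dA) (Fin dA) ℂ} {Q : Matrix (Fin dB) (Fin dB) ℂ}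
      (hP : P.PosSemidef) (hQ : Q.PosSemidef) (k : Fin n) :
      0 ≤ ((P ⊗ₖ Q) * (ρA k ⊗ₖ ρB k)).trace.re :=
    (Complex.nonneg_iff.mp <|
      (hP.kronecker hQ).trace_mul_nonneg ((hρA k).1.kronecker (hρB k).1)).1
  simp only [Matrix.mul_sum, Matrix.trace_sum, Matrix.mul_smul, Matrix.trace_smul, smul_eq_mul,
    ← Complex.real_smul, Complex.re_sum, Complex.smul_re]
  exact norm_sum_smul_sq_le _ (fun k _ => hp k)
    (fun k _ => re_nonneg (posSemidef_self_mul_conjTranspose A₁)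
      (posSemidef_conjTranspose_mul_self B₂) k)
    (fun k _ => re_nonneg (posSemidef_conjTranspose_mul_self A₂)
      (posSemidef_self_mul_conjTranspose B₁) k)
    fun k _ => norm_trace_kronecker_mul_sq_le (hρA k).1 (hρB k).1 A₁ A₂ B₁ B₂

/-- **The Cauchy–Schwarz separability criterion (Theorem 1).**
For every separable bipartite state `ρ`,
`|⟨A₁A₂ ⊗ B₁B₂⟩|² ≤ ⟨A₁A₁† ⊗ B₂†B₂⟩ ⟨A₂†A₂ ⊗ B₁B₁†⟩`. -/
theorem separable_cauchy_schwarz_criterion {dA dB : ℕ}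
    (ρ : Matrix (Fin dA × Fin dB) (Fin dA × Fin dB) ℂ)
    (hρ : IsDensityMatrix ρ) (hsep : Separable ρ)
    (A₁ A₂ : Matrix (Fin dA) (Fin dA) ℂ) (B₁ B₂ : Matrix (Fin dB) (Fin dB) ℂ) :
    ‖(((A₁ * A₂) ⊗ₖ (B₁ * B₂)) * ρ).trace‖ ^ 2 ≤
      ((((A₁ * A₁ᴴ) ⊗ₖ (B₂ᴴ * B₂)) * ρ).trace).re *
      ((((A₂ᴴ * A₂) ⊗ₖ (B₁ * B₁ᴴ)) * ρ).trace).re :=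
  separable_cauchy_schwarz_criterion_general ρ hsep A₁ A₂ B₁ B₂
end
end

section
/- Let ρ be a separable bipartite density matrix on ℂ^{dA}⊗ℂ^{dB}, and let a, α ∈ ℂ^{dA} and b, β ∈ ℂ^{dB} be arbitrary vectors. Then |⟨α⊗β, ρ(a⊗b)⟩|² ≤ Re⟨a⊗β, ρ(a⊗β)⟩ · Re⟨α⊗b, ρ(α⊗b)⟩, where ⟨·,·⟩ is the standard inner product on ℂ^{dA·dB} (conjugate-linear in the first argument) and u⊗v denotes the Kronecker product of vectors. -/
/-!
The criterion is the Peres–Horodecki (PPT) test read through Cauchy–Schwarz. The partial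
transpose of `∑ pₖ ρAₖ ⊗ ρBₖ` is `∑ pₖ ρAₖ ⊗ ρBₖᵀ`, again positive semidefinite, and
transposing the second factor moves `b` and `β` across the form:
`⟨u ⊗ v, ρ^Γ (w ⊗ z)⟩ = ⟨u ⊗ z̄, ρ (w ⊗ v̄)⟩`. Cauchy–Schwarz for the positive form of `ρ^Γ`
at `a ⊗ β̄` and `α ⊗ b̄` is then exactly the claimed inequality.
-/

open Matrix
open scoped Kronecker ComplexOrder

noncomputable section

/-- The Kronecker product of two vectors: `(u ⊗ v)_{(i,j)} = uᵢ vⱼ`. -/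
def vecKron {dA dB : ℕ} (u : Fin dA → ℂ) (v : Fin dB → ℂ) : Fin dA × Fin dB → ℂ :=
  fun i => u i.1 * v i.2

theorem Matrix.PosSemidef.norm_dotProduct_mulVec_sq_le {𝕜 n : Type*} [RCLike 𝕜] [Fintype n]
    {M : Matrix n n 𝕜} (hM : M.PosSemidef) (x y : n → 𝕜) :
    ‖star y ⬝ᵥ (M *ᵥ x)‖ ^ 2 ≤
      RCLike.re (star x ⬝ᵥ (M *ᵥ x)) * RCLike.re (star y ⬝ᵥ (M *ᵥ y)) := by
  let := M.toSeminormedAddCommGroup hM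
  let := M.toInnerProductSpace hM
  have hinner (u v : n → 𝕜) : inner 𝕜 u v = star u ⬝ᵥ (M *ᵥ v) := dotProduct_comm _ _
  have h := inner_mul_inner_self_le (𝕜 := 𝕜) x y
  rwa [norm_inner_symm x y, ← sq, hinner, hinner, hinner] at h

namespace Matrix

variable {m n R : Type*}

/-- The partial transpose `ρ^Γ`, transposing the second tensor factor. -/
def partialTranspose (ρ : Matrix (m × n) (m × n) R) : Matrix (m × n) (m × n) R :=
  of fun i j => ρ (i.1, j.2) (j.1, i.2)

@[simp]
theorem partialTranspose_apply (ρ : Matrix (m × n) (m × n) R) (i j : m × n) :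
    ρ.partialTranspose i j = ρ (i.1, j.2) (j.1, i.2) :=
  rfl

theorem partialTranspose_kronecker [Mul R] (A : Matrix m m R) (B : Matrix n n R) :
    (A ⊗ₖ B).partialTranspose = A ⊗ₖ Bᵀ :=
  rfl

theorem partialTranspose_smul {S : Type*} [SMul S R] (c : S) (ρ : Matrix (m × n) (m × n) R) :
    (c • ρ).partialTranspose = c • ρ.partialTranspose :=
  rfl

theorem partialTranspose_sum {ι : Type*} [AddCommMonoid R] (s : Finset ι)
    (ρ : ι → Matrix (m × n) (m × n) R) :
    (∑ k ∈ s, ρ k).partialTranspose = ∑ k ∈ s, (ρ k).partialTranspose := by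
  ext i j
  simp [Matrix.sum_apply]

end Matrix

theorem dotProduct_partialTranspose_mulVec_vecKron {dA dB : ℕ}
    (ρ : Matrix (Fin dA × Fin dB) (Fin dA × Fin dB) ℂ) (u w : Fin dA → ℂ) (v z : Fin dB → ℂ) :
    star (vecKron u v) ⬝ᵥ (ρ.partialTranspose *ᵥ vecKron w z) =
      star (vecKron u (star z)) ⬝ᵥ (ρ *ᵥ vecKron w (star v)) := by
  simp only [dotProduct, mulVec, vecKron, Finset.mul_sum, Fintype.sum_prod_type, Pi.star_apply,
    star_mul', star_star, partialTranspose_apply]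
  refine Finset.sum_congr rfl fun i _ => ?_
  rw [Finset.sum_comm]
  refine (Finset.sum_congr rfl fun k _ => Finset.sum_comm).trans Finset.sum_comm |>.trans ?_
  refine Finset.sum_congr rfl fun l _ => Finset.sum_congr rfl fun k _ =>
    Finset.sum_congr rfl fun j _ => ?_
  ring

theorem Separable.posSemidef_partialTranspose {dA dB : ℕ}
    {ρ : Matrix (Fin dA × Fin dB) (Fin dA × Fin dB) ℂ} (hρ : Separable ρ) :
    ρ.partialTranspose.PosSemidef := by
  obtain ⟨n, p, ρA, ρB, hp, -, hA, hB, rfl⟩ := hρ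
  rw [partialTranspose_sum]
  refine posSemidef_sum _ fun k _ => ?_
  rw [partialTranspose_smul, partialTranspose_kronecker]
  exact ((hA k).1.kronecker (hB k).1.transpose).smul (Complex.zero_le_real.mpr (hp k))

theorem separable_vector_criterion_general {dA dB : ℕ}
    (ρ : Matrix (Fin dA × Fin dB) (Fin dA × Fin dB) ℂ)
    (hsep : Separable ρ)
    (a α : Fin dA → ℂ) (b β : Fin dB → ℂ) :
    ‖star (vecKron α β) ⬝ᵥ (ρ *ᵥ vecKron a b)‖ ^ 2 ≤
      (star (vecKron a β) ⬝ᵥ (ρ *ᵥ vecKron a β)).re *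
      (star (vecKron α b) ⬝ᵥ (ρ *ᵥ vecKron α b)).re := by
  have h := hsep.posSemidef_partialTranspose.norm_dotProduct_mulVec_sq_le
    (vecKron a (star β)) (vecKron α (star b))
  simpa only [dotProduct_partialTranspose_mulVec_vecKron, star_star, RCLike.re_to_complex]
    using h

/-- **The optimal form of the Cauchy–Schwarz separability criterion (Eq. (21)).**
For every separable bipartite state `ρ` and all vectors `a, α, b, β`:
`|⟨α⊗β|ρ|a⊗b⟩|² ≤ ⟨a⊗β|ρ|a⊗β⟩ ⟨α⊗b|ρ|α⊗b⟩`. -/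
theorem separable_vector_criterion {dA dB : ℕ}
    (ρ : Matrix (Fin dA × Fin dB) (Fin dA × Fin dB) ℂ)
    (hρ : IsDensityMatrix ρ) (hsep : Separable ρ)
    (a α : Fin dA → ℂ) (b β : Fin dB → ℂ) :
    ‖star (vecKron α β) ⬝ᵥ (ρ *ᵥ vecKron a b)‖ ^ 2 ≤
      (star (vecKron a β) ⬝ᵥ (ρ *ᵥ vecKron a β)).re *
      (star (vecKron α b) ⬝ᵥ (ρ *ᵥ vecKron α b)).re :=
  separable_vector_criterion_general ρ hsep a α b β
end
end

section
/- Let ρ be a bipartite density matrix on ℂ^{dA}⊗ℂ^{dB} whose partial transpose ρ^{T_A} is positive semidefinite (i.e., ρ is a PPT state). Then for all dA×dA complex matrices A₁, A₂ and all dB×dB complex matrices B₁, B₂ one has |Tr((A₁A₂ ⊗ B₁B₂)ρ)|² ≤ Re Tr((A₁A₁† ⊗ B₂†B₂)ρ) · Re Tr((A₂†A₂ ⊗ B₁B₁†)ρ). In particular, no PPT state can violate the separability criterion of this form. -/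
open Matrix
open scoped Kronecker ComplexOrder

noncomputable section

/-- The partial transpose with respect to the first subsystem:
`(ρ^{T_A})_{(i,j),(k,l)} = ρ_{(k,j),(i,l)}`. -/
def partialTransposeA {dA dB : ℕ}
    (ρ : Matrix (Fin dA × Fin dB) (Fin dA × Fin dB) ℂ) :
    Matrix (Fin dA × Fin dB) (Fin dA × Fin dB) ℂ :=
  Matrix.of fun x y => ρ (y.1, x.2) (x.1, y.2)

/-!
Moving the partial transpose onto the observables gives `Tr((X ⊗ Y) ρ) = Tr((Xᵀ ⊗ Y) ρ^{T_A})`.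
For PPT `ρ` write `ρ^{T_A} = Sᴴ S`; then `⟨M, N⟩ := Tr(Mᴴ N ρ^{T_A})` is the Frobenius inner
product of `M Sᴴ` and `N Sᴴ`. With `M = A₂ᴴᵀ ⊗ B₁ᴴ` and `N = A₁ᵀ ⊗ B₂` the three traces of the
criterion are `⟨M, N⟩`, `⟨N, N⟩`, `⟨M, M⟩`, so the criterion is Cauchy–Schwarz for this form.
-/
variable {𝕜 : Type*} [RCLike 𝕜]

theorem norm_trace_conjTranspose_mul_sq_le {m n : Type*} [Fintype m] [Fintype n]
    (X Y : Matrix m n 𝕜) :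
    ‖(Xᴴ * Y).trace‖ ^ 2 ≤ RCLike.re (Xᴴ * X).trace * RCLike.re (Yᴴ * Y).trace := by
  have h_inner (A B : Matrix m n 𝕜) :
      inner 𝕜 (WithLp.toLp 2 A.vec) (WithLp.toLp 2 B.vec) = (Aᴴ * B).trace := by
    rw [EuclideanSpace.inner_toLp_toLp, ← star_vec_dotProduct_vec, dotProduct_comm]
  have := inner_mul_inner_self_le (𝕜 := 𝕜) (WithLp.toLp 2 X.vec) (WithLp.toLp 2 Y.vec)
  rwa [← inner_conj_symm (WithLp.toLp 2 Y.vec), RCLike.norm_conj, ← sq, h_inner, h_inner, h_inner]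
    at this

open scoped MatrixOrder in
theorem norm_trace_conjTranspose_mul_mul_sq_le {n : Type*} [Fintype n] [DecidableEq n]
    {τ : Matrix n n 𝕜} (hτ : τ.PosSemidef) (M N : Matrix n n 𝕜) :
    ‖(Mᴴ * N * τ).trace‖ ^ 2 ≤
      RCLike.re (Mᴴ * M * τ).trace * RCLike.re (Nᴴ * N * τ).trace := by
  obtain ⟨S, rfl⟩ := CStarAlgebra.nonneg_iff_eq_star_mul_self.mp hτ.nonneg
  have h_cyclic (P Q : Matrix n n 𝕜) :
      (Pᴴ * Q * (star S * S)).trace = ((P * Sᴴ)ᴴ * (Q * Sᴴ)).trace := by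
    rw [star_eq_conjTranspose, ← Matrix.mul_assoc, trace_mul_comm, conjTranspose_mul,
      conjTranspose_conjTranspose]
    simp only [Matrix.mul_assoc]
  simpa only [h_cyclic] using norm_trace_conjTranspose_mul_sq_le (M * Sᴴ) (N * Sᴴ)

theorem trace_transpose_kronecker_mul_partialTransposeA {dA dB : ℕ}
    (ρ : Matrix (Fin dA × Fin dB) (Fin dA × Fin dB) ℂ)
    (X : Matrix (Fin dA) (Fin dA) ℂ) (Y : Matrix (Fin dB) (Fin dB) ℂ) :
    ((Xᵀ ⊗ₖ Y) * partialTransposeA ρ).trace = ((X ⊗ₖ Y) * ρ).trace := by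
  simp only [Matrix.trace, Matrix.diag, Matrix.mul_apply, kroneckerMap_apply,
    partialTransposeA, of_apply, transpose_apply, Fintype.sum_prod_type]
  conv_lhs => enter [2, i]; rw [Finset.sum_comm]
  rw [Finset.sum_comm]
  conv_rhs => enter [2, i]; rw [Finset.sum_comm]

theorem ppt_satisfies_cauchy_schwarz_criterion_general {dA dB : ℕ}
    (ρ : Matrix (Fin dA × Fin dB) (Fin dA × Fin dB) ℂ)
    (hppt : (partialTransposeA ρ).PosSemidef)
    (A₁ A₂ : Matrix (Fin dA) (Fin dA) ℂ) (B₁ B₂ : Matrix (Fin dB) (Fin dB) ℂ) :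
    ‖(((A₁ * A₂) ⊗ₖ (B₁ * B₂)) * ρ).trace‖ ^ 2 ≤
      ((((A₁ * A₁ᴴ) ⊗ₖ (B₂ᴴ * B₂)) * ρ).trace).re *
      ((((A₂ᴴ * A₂) ⊗ₖ (B₁ * B₁ᴴ)) * ρ).trace).re := by
  have h := norm_trace_conjTranspose_mul_mul_sq_le hppt (A₂ᴴᵀ ⊗ₖ B₁ᴴ) (A₁ᵀ ⊗ₖ B₂)
  simp only [conjTranspose_kronecker, ← mul_kronecker_mul, conjTranspose_conjTranspose,
    conjTranspose_transpose_eq_transpose_conjTranspose, ← transpose_mul,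
    trace_transpose_kronecker_mul_partialTransposeA, RCLike.re_to_complex] at h
  exact h.trans_eq (mul_comm _ _)

/-- **PPT states satisfy the Cauchy–Schwarz separability criterion (Theorem 3).**
If the partial transpose of a bipartite density matrix `ρ` is positive semidefinite,
then `|⟨A₁A₂ ⊗ B₁B₂⟩|² ≤ ⟨A₁A₁† ⊗ B₂†B₂⟩ ⟨A₂†A₂ ⊗ B₁B₁†⟩`;
hence only NPT states can be detected by this criterion. -/
theorem ppt_satisfies_cauchy_schwarz_criterion {dA dB : ℕ}
    (ρ : Matrix (Fin dA × Fin dB) (Fin dA × Fin dB) ℂ)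
    (hρ : IsDensityMatrix ρ) (hppt : (partialTransposeA ρ).PosSemidef)
    (A₁ A₂ : Matrix (Fin dA) (Fin dA) ℂ) (B₁ B₂ : Matrix (Fin dB) (Fin dB) ℂ) :
    ‖(((A₁ * A₂) ⊗ₖ (B₁ * B₂)) * ρ).trace‖ ^ 2 ≤
      ((((A₁ * A₁ᴴ) ⊗ₖ (B₂ᴴ * B₂)) * ρ).trace).re *
      ((((A₂ᴴ * A₂) ⊗ₖ (B₁ * B₁ᴴ)) * ρ).trace).re :=
  ppt_satisfies_cauchy_schwarz_criterion_general ρ hppt A₁ A₂ B₁ B₂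
end
end

section
/- Let ρ be a bipartite density matrix on ℂ^{dA}⊗ℂ^{dB} and let (v_j, λ_j) be an orthonormal eigenbasis of the Hermitian matrix ρ^{T_A} with real eigenvalues λ_j. Suppose there exist vectors a₁, a₂ ∈ ℂ^{dA}, b₁, b₂ ∈ ℂ^{dB} and nonzero real constants c⁺ > 0 > c⁻ such that ⟨a₂⊗b₁, v_j⟩ = c⁺ ⟨a₁⊗b₂, v_j⟩ for every eigenvector v_j with λ_j > 0 and ⟨a₂⊗b₁, v_j⟩ = c⁻ ⟨a₁⊗b₂, v_j⟩ for every eigenvector v_j with λ_j < 0. Assume moreover S⁺ := ∑_{j: λ_j>0} λ_j |⟨v_j, a₁⊗b₂⟩|² > 0 and S⁻ := ∑_{j: λ_j<0} |λ_j| |⟨v_j, a₁⊗b₂⟩|² > 0. Then Re⟨a₂⊗b₁, ρ^{T_A}(a₂⊗b₁)⟩ · Re⟨a₁⊗b₂, ρ^{T_A}(a₁⊗b₂)⟩ < |⟨a₁⊗b₂, ρ^{T_A}(a₂⊗b₁)⟩|², i.e., the Cauchy–Schwarz-type separability bound is strictly violated, so ρ is entangled. -/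
open Matrix
open scoped ComplexOrder

noncomputable section

/-! Expanding in the eigenbasis of `ρ^{T_A}`, the three matrix elements are the values
`u₁ w₁ S⁺ - u₂ w₂ S⁻` of an indefinite form of signature `(1, 1)` at the vectors `(1, 1)` and
`(c⁺, c⁻)`. In signature `(1, 1)` the Gram determinant of two independent vectors is negative,
`-S⁺ S⁻ (c⁺ - c⁻)²`, which is the strict violation of the Cauchy–Schwarz bound. -/

theorem Matrix.dotProduct_mulVec_eq_sum_of_orthonormal_eigenvectors {ι κ R : Type*} [Fintype ι]
    [Fintype κ] [DecidableEq κ] [CommRing R] [StarRing R]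
    (hcard : Fintype.card κ = Fintype.card ι) {M : Matrix ι ι R} {v : κ → ι → R} {μ : κ → R}
    (horth : ∀ i j, star (v i) ⬝ᵥ v j = if i = j then 1 else 0)
    (heig : ∀ j, M *ᵥ v j = μ j • v j) (x y : ι → R) :
    star x ⬝ᵥ (M *ᵥ y) = ∑ j, (star x ⬝ᵥ v j) * μ j * star (star y ⬝ᵥ v j) := by
  classical
  set U : Matrix ι κ R := (of v)ᵀ
  have hUU : Uᴴ * U = 1 := by
    ext i j
    simpa [U, mul_apply, dotProduct, one_apply] using horth i j
  have hUU' : U * Uᴴ = 1 := (mul_eq_one_comm_of_card_eq _ _ _ hcard).1 hUU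
  have hMU : M * U = U * diagonal μ := by
    ext p j
    rw [mul_diagonal]
    simpa [U, mul_apply, mulVec, dotProduct, mul_comm (v j p)] using congrFun (heig j) p
  have hM : M = U * diagonal μ * Uᴴ := by
    rw [← hMU, Matrix.mul_assoc, hUU', Matrix.mul_one]
  rw [hM, ← mulVec_mulVec, ← mulVec_mulVec, dotProduct_mulVec, dotProduct]
  refine Finset.sum_congr rfl fun j _ => ?_
  rw [mulVec_diagonal, ← star_dotProduct, mul_assoc]
  rfl

theorem Finset.sum_eq_sum_filter_pos_add_sum_filter_neg {κ M : Type*} [Fintype κ]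
    [AddCommMonoid M] (μ : κ → ℝ) {f : κ → M} (hf : ∀ j, μ j = 0 → f j = 0) :
    ∑ j, f j = ∑ j ∈ univ.filter (fun j => 0 < μ j), f j
      + ∑ j ∈ univ.filter (fun j => μ j < 0), f j := by
  rw [← sum_filter_add_sum_filter_not univ (fun j => 0 < μ j)]
  congr 1
  refine (sum_subset (fun j => ?_) fun j hj hj' => hf j ?_).symm
  · simpa using le_of_lt
  · simp only [mem_filter, mem_univ, true_and, not_lt] at hj hj'
    exact le_antisymm hj hj'

theorem sum_mul_mul_star_eq_of_proportional {κ : Type*} [Fintype κ] (μ : κ → ℝ)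
    {a α β : κ → ℂ} {p q p' q' : ℝ}
    (hαpos : ∀ j, 0 < μ j → α j = p * a j) (hβpos : ∀ j, 0 < μ j → β j = q * a j)
    (hαneg : ∀ j, μ j < 0 → α j = p' * a j) (hβneg : ∀ j, μ j < 0 → β j = q' * a j) :
    ∑ j, α j * μ j * star (β j) =
      ((p * q * ∑ j ∈ Finset.univ.filter (fun j => 0 < μ j), μ j * ‖a j‖ ^ 2
        - p' * q' * ∑ j ∈ Finset.univ.filter (fun j => μ j < 0), |μ j| * ‖a j‖ ^ 2 : ℝ) : ℂ) := by
  have hterm : ∀ {r s : ℝ} j, α j = r * a j → β j = s * a j →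
      α j * μ j * star (β j) = ((r * s * (μ j * ‖a j‖ ^ 2) : ℝ) : ℂ) := by
    intro r s j hα hβ
    rw [hα, hβ, star_mul', Complex.star_def, Complex.conj_ofReal]
    push_cast
    rw [← Complex.mul_conj']
    ring
  rw [Finset.sum_eq_sum_filter_pos_add_sum_filter_neg μ (fun j hj => by simp [hj]),
    Finset.sum_congr rfl fun j hj =>
      have hj := (Finset.mem_filter.1 hj).2; hterm j (hαpos j hj) (hβpos j hj),
    Finset.sum_congr rfl fun j hj =>
      have hj := (Finset.mem_filter.1 hj).2; hterm j (hαneg j hj) (hβneg j hj)]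
  have hneg : ∑ j ∈ Finset.univ.filter (fun j => μ j < 0), μ j * ‖a j‖ ^ 2
      = -∑ j ∈ Finset.univ.filter (fun j => μ j < 0), |μ j| * ‖a j‖ ^ 2 := by
    rw [← Finset.sum_neg_distrib]
    refine Finset.sum_congr rfl fun j hj => ?_
    rw [abs_of_neg (Finset.mem_filter.1 hj).2, neg_mul, neg_neg]
  rw [← Complex.ofReal_sum, ← Complex.ofReal_sum, ← Complex.ofReal_add, ← Finset.mul_sum,
    ← Finset.mul_sum, hneg]
  congr 1
  ring

theorem reverse_cauchy_schwarz_hyperbolic {s t u₁ u₂ w₁ w₂ : ℝ} (hs : 0 < s) (ht : 0 < t)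
    (huw : u₁ * w₂ ≠ u₂ * w₁) :
    (u₁ * u₁ * s - u₂ * u₂ * t) * (w₁ * w₁ * s - w₂ * w₂ * t) <
      (u₁ * w₁ * s - u₂ * w₂ * t) ^ 2 := by
  have hdet : 0 < (u₁ * w₂ - u₂ * w₁) ^ 2 := by
    have := sub_ne_zero.2 huw
    positivity
  nlinarith [mul_pos (mul_pos hs ht) hdet]

theorem violation_from_eigenvector_overlaps_general {dA dB : ℕ}
    (ρ : Matrix (Fin dA × Fin dB) (Fin dA × Fin dB) ℂ)
    (v : Fin (dA * dB) → (Fin dA × Fin dB → ℂ)) (μ : Fin (dA * dB) → ℝ)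
    (horth : ∀ i j, star (v i) ⬝ᵥ v j = if i = j then 1 else 0)
    (heig : ∀ j, partialTransposeA ρ *ᵥ v j = (μ j : ℂ) • v j)
    (a₁ a₂ : Fin dA → ℂ) (b₁ b₂ : Fin dB → ℂ) (cp cm : ℝ)
    (hcp : 0 < cp) (hcm : cm < 0)
    (hplus : ∀ j, 0 < μ j →
      star (vecKron a₂ b₁) ⬝ᵥ v j = (cp : ℂ) * (star (vecKron a₁ b₂) ⬝ᵥ v j))
    (hminus : ∀ j, μ j < 0 →
      star (vecKron a₂ b₁) ⬝ᵥ v j = (cm : ℂ) * (star (vecKron a₁ b₂) ⬝ᵥ v j))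
    (hSplus : 0 < ∑ j ∈ Finset.univ.filter (fun j => 0 < μ j),
      μ j * ‖star (v j) ⬝ᵥ vecKron a₁ b₂‖ ^ 2)
    (hSminus : 0 < ∑ j ∈ Finset.univ.filter (fun j => μ j < 0),
      |μ j| * ‖star (v j) ⬝ᵥ vecKron a₁ b₂‖ ^ 2) :
    (star (vecKron a₂ b₁) ⬝ᵥ (partialTransposeA ρ *ᵥ vecKron a₂ b₁)).re *
      (star (vecKron a₁ b₂) ⬝ᵥ (partialTransposeA ρ *ᵥ vecKron a₁ b₂)).re <
    ‖star (vecKron a₁ b₂) ⬝ᵥ (partialTransposeA ρ *ᵥ vecKron a₂ b₁)‖ ^ 2 := by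
  set x₁ := vecKron a₁ b₂
  set x₂ := vecKron a₂ b₁
  have hexp := dotProduct_mulVec_eq_sum_of_orthonormal_eigenvectors (by simp) horth heig
  have hnorm : ∀ j, ‖star (v j) ⬝ᵥ x₁‖ = ‖star x₁ ⬝ᵥ v j‖ := fun j => by
    rw [star_dotProduct, norm_star]
  simp only [hnorm] at hSplus hSminus
  have hone : ∀ j, star x₁ ⬝ᵥ v j = ((1 : ℝ) : ℂ) * (star x₁ ⬝ᵥ v j) := fun j => by simp
  have h₁₁ := sum_mul_mul_star_eq_of_proportional μ (fun j _ => hone j) (fun j _ => hone j)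
    (fun j _ => hone j) (fun j _ => hone j)
  have h₂₂ := sum_mul_mul_star_eq_of_proportional μ hplus hplus hminus hminus
  have h₁₂ := sum_mul_mul_star_eq_of_proportional μ (fun j _ => hone j) hplus
    (fun j _ => hone j) hminus
  rw [hexp, hexp, hexp, h₁₁, h₂₂, h₁₂, Complex.ofReal_re, Complex.ofReal_re, Complex.norm_real,
    Real.norm_eq_abs, sq_abs]
  linarith [reverse_cauchy_schwarz_hyperbolic (u₁ := cp) (u₂ := cm) (w₁ := 1) (w₂ := 1)
    hSplus hSminus (by linarith)]

/-- **Lemma 4.**  If there are product vectors `a₁⊗b₂`, `a₂⊗b₁` whose overlaps with the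
eigenvectors of `ρ^{T_A}` corresponding to positive (resp. negative) eigenvalues are
proportional with constants `c⁺ > 0 > c⁻`, and both the positive and the negative parts
contribute, then the Cauchy–Schwarz separability bound is strictly violated, i.e. `ρ` is
entangled. -/
theorem violation_from_eigenvector_overlaps {dA dB : ℕ}
    (ρ : Matrix (Fin dA × Fin dB) (Fin dA × Fin dB) ℂ)
    (hρ : IsDensityMatrix ρ)
    (v : Fin (dA * dB) → (Fin dA × Fin dB → ℂ)) (μ : Fin (dA * dB) → ℝ)
    (horth : ∀ i j, star (v i) ⬝ᵥ v j = if i = j then 1 else 0)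
    (heig : ∀ j, partialTransposeA ρ *ᵥ v j = (μ j : ℂ) • v j)
    (a₁ a₂ : Fin dA → ℂ) (b₁ b₂ : Fin dB → ℂ) (cp cm : ℝ)
    (hcp : 0 < cp) (hcm : cm < 0)
    (hplus : ∀ j, 0 < μ j →
      star (vecKron a₂ b₁) ⬝ᵥ v j = (cp : ℂ) * (star (vecKron a₁ b₂) ⬝ᵥ v j))
    (hminus : ∀ j, μ j < 0 →
      star (vecKron a₂ b₁) ⬝ᵥ v j = (cm : ℂ) * (star (vecKron a₁ b₂) ⬝ᵥ v j))
    (hSplus : 0 < ∑ j ∈ Finset.univ.filter (fun j => 0 < μ j),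
      μ j * ‖star (v j) ⬝ᵥ vecKron a₁ b₂‖ ^ 2)
    (hSminus : 0 < ∑ j ∈ Finset.univ.filter (fun j => μ j < 0),
      |μ j| * ‖star (v j) ⬝ᵥ vecKron a₁ b₂‖ ^ 2) :
    (star (vecKron a₂ b₁) ⬝ᵥ (partialTransposeA ρ *ᵥ vecKron a₂ b₁)).re *
      (star (vecKron a₁ b₂) ⬝ᵥ (partialTransposeA ρ *ᵥ vecKron a₁ b₂)).re <
    ‖star (vecKron a₁ b₂) ⬝ᵥ (partialTransposeA ρ *ᵥ vecKron a₂ b₁)‖ ^ 2 :=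
  violation_from_eigenvector_overlaps_general ρ v μ horth heig a₁ a₂ b₁ b₂ cp cm hcp hcm hplus
    hminus hSplus hSminus
end
end

section
/- Let ψ ∈ ℂ^d⊗ℂ^d be a unit vector, let 0 ≤ p ≤ 1, set D = d², and consider the state ρ_wn = p |ψ⟩⟨ψ| + ((1−p)/D)·𝟙_D on ℂ^d⊗ℂ^d. If the partial transpose ρ_wn^{T_A} has a negative eigenvalue (i.e., ρ_wn is NPT), then there exist vectors a, α ∈ ℂ^d and b, β ∈ ℂ^d such that Re⟨a⊗β, ρ_wn(a⊗β)⟩ · Re⟨α⊗b, ρ_wn(α⊗b)⟩ < |⟨α⊗β, ρ_wn(a⊗b)⟩|², i.e., ρ_wn violates the Cauchy–Schwarz separability criterion. -/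
open Matrix
open scoped ComplexOrder

noncomputable section

/-!
Write `ψ = ∑ᵢ sᵢ • xᵢ ⊗ yᵢ` in Schmidt form. In the coefficients `C m n = ⟨x̄ₘ ⊗ yₙ, v⟩`, the
quadratic form of `(|ψ⟩⟨ψ|)^{T_A}` at `v` is `∑ₘₙ sₘ sₙ conj (C n m) * C m n`. Its diagonal terms
are nonnegative and each off-diagonal one is at least `-|sₘ sₙ| (‖C m n‖² + ‖C n m‖²) / 2`, so by
Bessel's inequality `ρ_wn^{T_A}` is positive semidefinite as soon as `p |sₘ sₙ| ≤ (1 - p) / D` for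
all `m ≠ n`. An NPT `ρ_wn` therefore has `i ≠ j` with `(1 - p) / D < p |sᵢ sⱼ|`, and then
`a = xᵢ, α = xⱼ, b = yᵢ, β = yⱼ` violate the criterion: both diagonal terms equal `(1 - p) / D`,
while the off-diagonal one is `p sᵢ sⱼ`.
-/

theorem dotProduct_vecMulVec_mulVec {n : Type*} [Fintype n] (a u w b : n → ℂ) :
    star a ⬝ᵥ (vecMulVec u (star w) *ᵥ b) = (star a ⬝ᵥ u) * (star w ⬝ᵥ b) := by
  rw [vecMulVec_mulVec, dotProduct_smul, op_smul_eq_mul, mul_comm]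

theorem dotProduct_whiteNoise_mulVec {n : Type*} [Fintype n] [DecidableEq n] (ψ a b : n → ℂ)
    (p c : ℝ) :
    star a ⬝ᵥ (((p : ℂ) • vecMulVec ψ (star ψ) + (c : ℂ) • 1) *ᵥ b) =
      p * ((star a ⬝ᵥ ψ) * (star ψ ⬝ᵥ b)) + c * (star a ⬝ᵥ b) := by
  rw [add_mulVec, smul_mulVec, smul_mulVec, one_mulVec, dotProduct_add, dotProduct_smul,
    dotProduct_smul, dotProduct_vecMulVec_mulVec, smul_eq_mul, smul_eq_mul]

section Kronecker

variable {dA dB : ℕ}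

theorem star_vecKron (x : Fin dA → ℂ) (y : Fin dB → ℂ) :
    star (vecKron x y) = vecKron (star x) (star y) := by
  funext i
  simp [vecKron]

theorem vecKron_dotProduct_vecKron (x x' : Fin dA → ℂ) (y y' : Fin dB → ℂ) :
    vecKron x y ⬝ᵥ vecKron x' y' = (x ⬝ᵥ x') * (y ⬝ᵥ y') := by
  simp only [dotProduct, Fintype.sum_prod_type, Finset.sum_mul_sum, vecKron]
  exact Finset.sum_congr rfl fun _ _ => Finset.sum_congr rfl fun _ _ => by ring

theorem partialTransposeA_one :
    partialTransposeA (1 : Matrix (Fin dA × Fin dB) (Fin dA × Fin dB) ℂ) = 1 := by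
  ext x y
  simp only [partialTransposeA, of_apply, one_apply, Prod.ext_iff]
  exact if_congr ⟨fun h => ⟨h.1.symm, h.2⟩, fun h => ⟨h.1.symm, h.2⟩⟩ rfl rfl

theorem partialTransposeA_add (ρ σ : Matrix (Fin dA × Fin dB) (Fin dA × Fin dB) ℂ) :
    partialTransposeA (ρ + σ) = partialTransposeA ρ + partialTransposeA σ := rfl

theorem partialTransposeA_smul (c : ℂ) (ρ : Matrix (Fin dA × Fin dB) (Fin dA × Fin dB) ℂ) :
    partialTransposeA (c • ρ) = c • partialTransposeA ρ := rfl

variable {ι : Type*} [Fintype ι]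

theorem partialTransposeA_vecMulVec_sum (s : ι → ℝ) (x : ι → Fin dA → ℂ) (y : ι → Fin dB → ℂ) :
    partialTransposeA (vecMulVec (∑ m, (s m : ℂ) • vecKron (x m) (y m))
        (star (∑ m, (s m : ℂ) • vecKron (x m) (y m)))) =
      ∑ m, ∑ n, ((s m * s n : ℝ) : ℂ) •
        vecMulVec (vecKron (star (x n)) (y m)) (star (vecKron (star (x m)) (y n))) := by
  ext a b
  simp only [partialTransposeA, of_apply, vecMulVec_apply, Matrix.sum_apply, Matrix.smul_apply,
    Finset.sum_apply, Pi.smul_apply, star_sum, star_smul, Pi.star_apply, vecKron,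
    Finset.sum_mul_sum, smul_eq_mul, RCLike.star_def, map_mul, Complex.conj_ofReal,
    Complex.conj_conj, Complex.ofReal_mul]
  exact Finset.sum_congr rfl fun _ _ => Finset.sum_congr rfl fun _ _ => by ring

theorem dotProduct_partialTransposeA_mulVec (s : ι → ℝ) (x : ι → Fin dA → ℂ)
    (y : ι → Fin dB → ℂ) (v : Fin dA × Fin dB → ℂ) :
    star v ⬝ᵥ (partialTransposeA (vecMulVec (∑ m, (s m : ℂ) • vecKron (x m) (y m))
        (star (∑ m, (s m : ℂ) • vecKron (x m) (y m)))) *ᵥ v) =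
      ∑ m, ∑ n, ((s m * s n : ℝ) : ℂ) * (star (star (vecKron (star (x n)) (y m)) ⬝ᵥ v) *
        (star (vecKron (star (x m)) (y n)) ⬝ᵥ v)) := by
  simp only [partialTransposeA_vecMulVec_sum, sum_mulVec, dotProduct_sum, smul_mulVec,
    dotProduct_smul, dotProduct_vecMulVec_mulVec, smul_eq_mul]
  simp only [star_dotProduct v]

end Kronecker

section Orthonormal

variable {ι κ n : Type*} [Fintype n] [DecidableEq ι] [DecidableEq κ]

/-- The `dotProduct` form of `Orthonormal`, for vectors given as plain functions. -/
def IsOrthonormal (e : ι → n → ℂ) : Prop :=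
  ∀ i j, star (e i) ⬝ᵥ e j = if i = j then 1 else 0

theorem IsOrthonormal.orthonormal_toLp {e : ι → n → ℂ} (he : IsOrthonormal e) :
    Orthonormal ℂ fun i => WithLp.toLp 2 (e i) := by
  rw [orthonormal_iff_ite]
  intro i j
  rw [EuclideanSpace.inner_toLp_toLp, dotProduct_comm, he]

theorem IsOrthonormal.comp_injective {e : ι → n → ℂ} (he : IsOrthonormal e) {f : κ → ι}
    (hf : Function.Injective f) : IsOrthonormal (e ∘ f) :=
  fun i j => (he (f i) (f j)).trans (if_congr hf.eq_iff rfl rfl)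

theorem IsOrthonormal.sum_norm_sq_le [Fintype ι] {e : ι → n → ℂ} (he : IsOrthonormal e)
    (v : n → ℂ) : ∑ i, ‖star (e i) ⬝ᵥ v‖ ^ 2 ≤ (star v ⬝ᵥ v).re := by
  calc ∑ i, ‖star (e i) ⬝ᵥ v‖ ^ 2
      = ∑ i, ‖inner ℂ (WithLp.toLp 2 (e i)) (WithLp.toLp 2 v)‖ ^ 2 := by
        simp only [EuclideanSpace.inner_toLp_toLp, dotProduct_comm]
    _ ≤ ‖WithLp.toLp 2 v‖ ^ 2 := he.orthonormal_toLp.sum_inner_products_le _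
    _ = (star v ⬝ᵥ v).re := by
        rw [@norm_sq_eq_re_inner ℂ, EuclideanSpace.inner_toLp_toLp, dotProduct_comm]
        rfl

theorem IsOrthonormal.star {e : ι → n → ℂ} (he : IsOrthonormal e) :
    IsOrthonormal fun i => star (e i) := by
  intro i j
  rw [star_star, dotProduct_comm, he]
  simp only [eq_comm]

variable {dA dB : ℕ} {x : ι → Fin dA → ℂ} {y : κ → Fin dB → ℂ}

theorem star_vecKron_dotProduct_vecKron (hx : IsOrthonormal x) (hy : IsOrthonormal y)
    (i j : ι) (k l : κ) :
    star (vecKron (x i) (y k)) ⬝ᵥ vecKron (x j) (y l) = if i = j ∧ k = l then 1 else 0 := by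
  rw [star_vecKron, vecKron_dotProduct_vecKron, hx, hy]
  by_cases i = j <;> by_cases k = l <;> simp [*]

theorem IsOrthonormal.vecKron (hx : IsOrthonormal x) (hy : IsOrthonormal y) :
    IsOrthonormal fun i : ι × κ => vecKron (x i.1) (y i.2) := by
  rintro ⟨i, k⟩ ⟨j, l⟩
  simp only [star_vecKron_dotProduct_vecKron hx hy, Prod.ext_iff]

end Orthonormal

section Schmidt

variable {dA dB : ℕ}

theorem exists_orthogonal_vecKron_sum (ψ : Fin dA × Fin dB → ℂ) :
    ∃ (u : Fin dA → Fin dA → ℂ) (r : Fin dA → Fin dB → ℂ) (σ : Fin dA → ℝ), IsOrthonormal u ∧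
      (∀ m n, star (r m) ⬝ᵥ r n = if m = n then (σ m : ℂ) else 0) ∧
        ψ = ∑ m, vecKron (u m) (r m) := by
  set Ψ : Matrix (Fin dA) (Fin dB) ℂ := of fun i j => ψ (i, j)
  have hH : (Ψ * Ψᴴ).IsHermitian := isHermitian_mul_conjTranspose_self Ψ
  set U : Matrix (Fin dA) (Fin dA) ℂ := (hH.eigenvectorUnitary : Matrix (Fin dA) (Fin dA) ℂ)
  have hUU : Uᴴ * U = 1 := Unitary.coe_star_mul_self hH.eigenvectorUnitary
  have hUU' : U * Uᴴ = 1 := Unitary.coe_mul_star_self hH.eigenvectorUnitary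
  have hdiag : (Uᴴ * Ψ) * (Uᴴ * Ψ)ᴴ = diagonal (fun m => (hH.eigenvalues m : ℂ)) := by
    have := hH.conjStarAlgAut_star_eigenvectorUnitary
    rw [Unitary.conjStarAlgAut_star_apply] at this
    rw [conjTranspose_mul, conjTranspose_conjTranspose, ← Matrix.mul_assoc, Matrix.mul_assoc _ Ψ]
    exact this
  refine ⟨fun m i => U i m, fun m => (Uᴴ * Ψ) m, hH.eigenvalues, ?_, ?_, ?_⟩
  · intro m n
    simpa [Matrix.mul_apply, dotProduct, one_apply] using congrFun (congrFun hUU m) n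
  · intro m n
    have hnm : (Uᴴ * Ψ) n ⬝ᵥ star ((Uᴴ * Ψ) m) = ((Uᴴ * Ψ) * (Uᴴ * Ψ)ᴴ) n m := by
      simp only [mul_apply', conjTranspose_apply]
      rfl
    change star ((Uᴴ * Ψ) m) ⬝ᵥ (Uᴴ * Ψ) n = _
    rw [dotProduct_comm, hnm, hdiag]
    obtain rfl | h := eq_or_ne m n
    · simp
    · simp [h, Ne.symm h]
  · funext a
    have : Ψ = U * (Uᴴ * Ψ) := by rw [← Matrix.mul_assoc, hUU', Matrix.one_mul]
    simpa [Ψ, Matrix.mul_apply, vecKron, Finset.sum_apply] using congrFun (congrFun this a.1) a.2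

theorem exists_schmidt_of_orthogonal {ι : Type*} [Fintype ι] [DecidableEq ι]
    {u : ι → Fin dA → ℂ} {r : ι → Fin dB → ℂ} {σ : ι → ℝ} (hu : IsOrthonormal u)
    (hr : ∀ m n, star (r m) ⬝ᵥ r n = if m = n then (σ m : ℂ) else 0) :
    ∃ (k : ℕ) (s : Fin k → ℝ) (x : Fin k → Fin dA → ℂ) (y : Fin k → Fin dB → ℂ),
      IsOrthonormal x ∧ IsOrthonormal y ∧
        ∑ m, vecKron (u m) (r m) = ∑ i, (s i : ℂ) • vecKron (x i) (y i) := by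
  have hσ : ∀ m, 0 ≤ σ m := fun m => by
    simpa [hr m m] using dotProduct_star_self_nonneg (r m)
  have hr0 : ∀ m, σ m = 0 → r m = 0 := fun m h =>
    dotProduct_star_self_eq_zero.mp (by simp [hr m m, h])
  set w : ι → Fin dB → ℂ := fun m => ((√(σ m))⁻¹ : ℂ) • r m
  have hw : ∀ m n, σ m ≠ 0 → star (w m) ⬝ᵥ w n = if m = n then 1 else 0 := by
    intro m n hm
    simp only [w, star_smul, smul_dotProduct, dotProduct_smul, hr, smul_eq_mul, RCLike.star_def,
      map_inv₀, Complex.conj_ofReal]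
    split_ifs with h
    · subst h
      rw [← Complex.ofReal_inv, ← Complex.ofReal_mul, ← Complex.ofReal_mul, ← mul_assoc,
        ← mul_inv, Real.mul_self_sqrt (hσ m), inv_mul_cancel₀ hm, Complex.ofReal_one]
    · simp
  have hnormalize : ∀ m, σ m ≠ 0 → vecKron (u m) (r m) = (√(σ m) : ℂ) • vecKron (u m) (w m) := by
    intro m hm
    have : (√(σ m) : ℂ) ≠ 0 := by exact_mod_cast (Real.sqrt_pos.mpr ((hσ m).lt_of_ne' hm)).ne'
    funext a
    simp only [vecKron, w, Pi.smul_apply, smul_eq_mul]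
    field_simp
  set T := {m // σ m ≠ 0}
  set e : Fin (Fintype.card T) ≃ T := (Fintype.equivFin T).symm
  have he : Function.Injective fun i => (e i : ι) := Subtype.val_injective.comp e.injective
  refine ⟨Fintype.card T, fun i => √(σ (e i)), fun i => u (e i), fun i => w (e i),
    hu.comp_injective he, fun i j => (hw _ _ (e i).2).trans (if_congr he.eq_iff rfl rfl),
    ?_⟩
  calc ∑ m, vecKron (u m) (r m)
      = ∑ m ∈ Finset.univ.filter (fun m => σ m ≠ 0), vecKron (u m) (r m) := by
        refine (Finset.sum_filter_of_ne (p := fun m => σ m ≠ 0) fun m _ hne hm => hne ?_).symm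
        funext a
        simp [vecKron, hr0 m hm]
    _ = ∑ m : T, vecKron (u m) (r m) := Finset.sum_subtype _ (by simp) _
    _ = ∑ i, (√(σ (e i)) : ℂ) • vecKron (u (e i)) (w (e i)) := by
        rw [← e.sum_comp]
        exact Finset.sum_congr rfl fun i _ => hnormalize _ (e i).2

theorem exists_schmidt_decomposition (ψ : Fin dA × Fin dB → ℂ) :
    ∃ (k : ℕ) (s : Fin k → ℝ) (x : Fin k → Fin dA → ℂ) (y : Fin k → Fin dB → ℂ),
      IsOrthonormal x ∧ IsOrthonormal y ∧ ψ = ∑ i, (s i : ℂ) • vecKron (x i) (y i) := by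
  obtain ⟨u, r, σ, hu, hr, rfl⟩ := exists_orthogonal_vecKron_sum ψ
  exact exists_schmidt_of_orthogonal hu hr

variable {ι : Type*} [Fintype ι] [DecidableEq ι] {x : ι → Fin dA → ℂ} {y : ι → Fin dB → ℂ}

theorem star_vecKron_dotProduct_sum (hx : IsOrthonormal x) (hy : IsOrthonormal y) (s : ι → ℝ)
    (i j : ι) :
    star (vecKron (x i) (y j)) ⬝ᵥ ∑ m, (s m : ℂ) • vecKron (x m) (y m) =
      if i = j then (s i : ℂ) else 0 := by
  simp only [dotProduct_sum, dotProduct_smul, star_vecKron_dotProduct_vecKron hx hy, smul_eq_mul,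
    mul_ite, mul_one, mul_zero]
  obtain rfl | h := eq_or_ne i j
  · simp
  · rw [if_neg h]
    exact Finset.sum_eq_zero fun m _ => if_neg fun hm => h (hm.1.trans hm.2.symm)

theorem star_sum_dotProduct_vecKron (hx : IsOrthonormal x) (hy : IsOrthonormal y) (s : ι → ℝ)
    (i j : ι) :
    star (∑ m, (s m : ℂ) • vecKron (x m) (y m)) ⬝ᵥ vecKron (x i) (y j) =
      if i = j then (s i : ℂ) else 0 := by
  rw [star_dotProduct, star_vecKron_dotProduct_sum hx hy]
  split_ifs <;> simp

end Schmidt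

section PartialTransposeBound

variable {ι : Type*} [Fintype ι]

theorem neg_mul_norm_sq_le_re_mul {p c r : ℝ} (hp : 0 ≤ p) (hr : p * |r| ≤ c) (z w : ℂ) :
    -(c / 2) * (‖z‖ ^ 2 + ‖w‖ ^ 2) ≤ p * (r * (star w * z)).re := by
  have hre : |(r * (star w * z)).re| ≤ |r| * (‖w‖ * ‖z‖) := by
    calc |(r * (star w * z)).re| ≤ ‖(r : ℂ) * (star w * z)‖ := Complex.abs_re_le_norm _
      _ = |r| * (‖w‖ * ‖z‖) := by simp
  have hc : 0 ≤ c := (mul_nonneg hp (abs_nonneg r)).trans hr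
  nlinarith [neg_abs_le (r * (star w * z)).re, sq_nonneg (‖z‖ - ‖w‖), norm_nonneg z, norm_nonneg w,
    mul_nonneg (norm_nonneg w) (norm_nonneg z),
    mul_le_mul_of_nonneg_right hr (mul_nonneg (norm_nonneg w) (norm_nonneg z))]

theorem neg_mul_sum_norm_sq_le_re_sum {p c : ℝ} (hp : 0 ≤ p) (hc : 0 ≤ c) (s : ι → ℝ)
    (hs : ∀ m n, m ≠ n → p * |s m * s n| ≤ c) (C : ι → ι → ℂ) :
    -c * ∑ m, ∑ n, ‖C m n‖ ^ 2 ≤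
      p * (∑ m, ∑ n, ((s m * s n : ℝ) : ℂ) * (star (C n m) * C m n)).re := by
  have hterm : ∀ m n, -(c / 2) * (‖C m n‖ ^ 2 + ‖C n m‖ ^ 2) ≤
      p * (((s m * s n : ℝ) : ℂ) * (star (C n m) * C m n)).re := by
    intro m n
    rcases eq_or_ne m n with rfl | hmn
    · have hdiag : 0 ≤ (((s m * s m : ℝ) : ℂ) * (star (C m m) * C m m)).re := by
        rw [Complex.re_ofReal_mul, RCLike.star_def, ← Complex.normSq_eq_conj_mul_self,
          Complex.ofReal_re]
        exact mul_nonneg (mul_self_nonneg _) (Complex.normSq_nonneg _)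
      nlinarith [mul_nonneg hp hdiag, sq_nonneg ‖C m m‖]
    · exact neg_mul_norm_sq_le_re_mul hp (hs m n hmn) _ _
  have hswap : ∑ m, ∑ n, ‖C n m‖ ^ 2 = ∑ m, ∑ n, ‖C m n‖ ^ 2 := Finset.sum_comm
  calc -c * ∑ m, ∑ n, ‖C m n‖ ^ 2
      = ∑ m, ∑ n, -(c / 2) * (‖C m n‖ ^ 2 + ‖C n m‖ ^ 2) := by
        simp only [mul_add, Finset.sum_add_distrib, ← Finset.mul_sum, hswap]
        ring
    _ ≤ ∑ m, ∑ n, p * (((s m * s n : ℝ) : ℂ) * (star (C n m) * C m n)).re :=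
        Finset.sum_le_sum fun m _ => Finset.sum_le_sum fun n _ => hterm m n
    _ = p * (∑ m, ∑ n, ((s m * s n : ℝ) : ℂ) * (star (C n m) * C m n)).re := by
        simp only [Complex.re_sum, Finset.mul_sum]

variable [DecidableEq ι] {dA dB : ℕ}

theorem re_dotProduct_partialTransposeA_mulVec_nonneg {ψ : Fin dA × Fin dB → ℂ} {s : ι → ℝ}
    {x : ι → Fin dA → ℂ} {y : ι → Fin dB → ℂ} (hx : IsOrthonormal x) (hy : IsOrthonormal y)
    (hψ : ψ = ∑ m, (s m : ℂ) • vecKron (x m) (y m)) {p c : ℝ} (hp : 0 ≤ p) (hc : 0 ≤ c)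
    (hs : ∀ m n, m ≠ n → p * |s m * s n| ≤ c) (v : Fin dA × Fin dB → ℂ) :
    0 ≤ (star v ⬝ᵥ
      (partialTransposeA ((p : ℂ) • vecMulVec ψ (star ψ) + (c : ℂ) • 1) *ᵥ v)).re := by
  set C : ι → ι → ℂ := fun m n => star (vecKron (star (x m)) (y n)) ⬝ᵥ v
  have hbessel : ∑ m, ∑ n, ‖C m n‖ ^ 2 ≤ (star v ⬝ᵥ v).re := by
    simpa only [Fintype.sum_prod_type] using (hx.star.vecKron hy).sum_norm_sq_le v
  have hform := neg_mul_sum_norm_sq_le_re_sum hp hc s hs C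
  rw [partialTransposeA_add, partialTransposeA_smul, partialTransposeA_smul,
    partialTransposeA_one, add_mulVec, smul_mulVec, smul_mulVec, one_mulVec, dotProduct_add,
    dotProduct_smul, dotProduct_smul, hψ, dotProduct_partialTransposeA_mulVec, smul_eq_mul,
    smul_eq_mul, Complex.add_re, Complex.re_ofReal_mul, Complex.re_ofReal_mul]
  nlinarith

end PartialTransposeBound

theorem white_noise_npt_violates_criterion_general {d : ℕ}
    (ψ : Fin d × Fin d → ℂ)
    (p : ℝ) (hp0 : 0 ≤ p) (hp1 : p ≤ 1)
    (ρwn : Matrix (Fin d × Fin d) (Fin d × Fin d) ℂ)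
    (hρwn : ρwn = (p : ℂ) • Matrix.vecMulVec ψ (star ψ) +
      (((1 - p) / (d ^ 2 : ℝ) : ℝ) : ℂ) • (1 : Matrix (Fin d × Fin d) (Fin d × Fin d) ℂ))
    (hNPT : ∃ (μ : ℝ) (v : Fin d × Fin d → ℂ), μ < 0 ∧ v ≠ 0 ∧
      partialTransposeA ρwn *ᵥ v = (μ : ℂ) • v) :
    ∃ (a α : Fin d → ℂ) (b β : Fin d → ℂ),
      (star (vecKron a β) ⬝ᵥ (ρwn *ᵥ vecKron a β)).re *
        (star (vecKron α b) ⬝ᵥ (ρwn *ᵥ vecKron α b)).re <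
      ‖star (vecKron α β) ⬝ᵥ (ρwn *ᵥ vecKron a b)‖ ^ 2 := by
  obtain ⟨μ, v, hμ, hv, hEig⟩ := hNPT
  obtain ⟨k, s, x, y, hx, hy, rfl⟩ := exists_schmidt_decomposition ψ
  set c : ℝ := (1 - p) / (d ^ 2 : ℝ)
  have hc : 0 ≤ c := div_nonneg (by linarith) (by positivity)
  obtain ⟨i, j, hij, hcij⟩ : ∃ i j, i ≠ j ∧ c < p * |s i * s j| := by
    by_contra! hs
    have hPPT := re_dotProduct_partialTransposeA_mulVec_nonneg hx hy rfl hp0 hc hs v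
    rw [← hρwn, hEig, dotProduct_smul, smul_eq_mul, Complex.re_ofReal_mul] at hPPT
    have hv : 0 < (star v ⬝ᵥ v).re :=
      (Complex.pos_iff.mp (dotProduct_star_self_pos_iff.mpr hv)).1
    nlinarith
  refine ⟨x i, x j, y i, y j, ?_⟩
  simp only [hρwn, dotProduct_whiteNoise_mulVec, star_vecKron_dotProduct_sum hx hy,
    star_sum_dotProduct_vecKron hx hy, star_vecKron_dotProduct_vecKron hx hy, if_neg hij,
    if_neg hij.symm, and_self, if_true, mul_zero, mul_one, zero_add, add_zero]
  rw [← Complex.ofReal_mul, ← Complex.ofReal_mul, Complex.norm_real, Complex.ofReal_re,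
    Real.norm_eq_abs, abs_mul, abs_of_nonneg hp0, mul_comm (s j)]
  nlinarith

/-- **Theorem 6: every NPT state mixed with white noise is detected.**
For `ρ_wn = p |ψ⟩⟨ψ| + (1-p)/D · 𝟙` with `D = d²`: if `ρ_wn^{T_A}` has a negative
eigenvalue, then `ρ_wn` violates the Cauchy–Schwarz separability criterion. -/
theorem white_noise_npt_violates_criterion {d : ℕ}
    (ψ : Fin d × Fin d → ℂ) (hψ : star ψ ⬝ᵥ ψ = 1)
    (p : ℝ) (hp0 : 0 ≤ p) (hp1 : p ≤ 1)
    (ρwn : Matrix (Fin d × Fin d) (Fin d × Fin d) ℂ)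
    (hρwn : ρwn = (p : ℂ) • Matrix.vecMulVec ψ (star ψ) +
      (((1 - p) / (d ^ 2 : ℝ) : ℝ) : ℂ) • (1 : Matrix (Fin d × Fin d) (Fin d × Fin d) ℂ))
    (hNPT : ∃ (μ : ℝ) (v : Fin d × Fin d → ℂ), μ < 0 ∧ v ≠ 0 ∧
      partialTransposeA ρwn *ᵥ v = (μ : ℂ) • v) :
    ∃ (a α : Fin d → ℂ) (b β : Fin d → ℂ),
      (star (vecKron a β) ⬝ᵥ (ρwn *ᵥ vecKron a β)).re *
        (star (vecKron α b) ⬝ᵥ (ρwn *ᵥ vecKron α b)).re <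
      ‖star (vecKron α β) ⬝ᵥ (ρwn *ᵥ vecKron a b)‖ ^ 2 :=
  white_noise_npt_violates_criterion_general ψ p hp0 hp1 ρwn hρwn hNPT
end
end

section
/- Let ρ_1, ρ_2, ρ_3 be density matrices on ℂ^{d_1}, ℂ^{d_2}, ℂ^{d_3} respectively, and for each k let P_k, Q_k be d_k×d_k complex matrices. Then for the uncorrelated state ρ = ρ_1 ⊗ ρ_2 ⊗ ρ_3 one has |Tr((P_1Q_1 ⊗ P_2Q_2 ⊗ P_3Q_3)ρ)|² ≤ Re Tr((P_1P_1† ⊗ Q_2†Q_2 ⊗ 𝟙)ρ) · Re Tr((𝟙 ⊗ P_2P_2† ⊗ Q_3†Q_3)ρ) · Re Tr((Q_1†Q_1 ⊗ 𝟙 ⊗ P_3P_3†)ρ), where 𝟙 denotes the identity matrix on the respective factor. -/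
/-!
The trace of a Kronecker product is the product of the traces, so in the product state every
expectation value factorises into single-party ones, the identity factors contributing
`Tr ρₖ = 1`. On each factor `(X, Y) ↦ Tr(Y ρₖ Xᴴ)` is a positive semidefinite Hermitian form,
so Cauchy–Schwarz for `X = Pₖᴴ`, `Y = Qₖ` gives `|Tr(PₖQₖρₖ)|² ≤ Tr(PₖPₖᴴρₖ) Tr(QₖᴴQₖρₖ)`.
These six traces are nonnegative reals, so multiplying the three bounds and regrouping the
factors gives the claim.
-/

open Matrix
open scoped Kronecker ComplexOrder

noncomputable section

theorem RCLike.re_mul_of_nonneg {K : Type*} [RCLike K] {z : K} (hz : 0 ≤ z) (w : K) :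
    re (z * w) = re z * re w := by
  simp [mul_re, (nonneg_iff.mp hz).2]

namespace Matrix.PosSemidef

variable {𝕜 n : Type*} [RCLike 𝕜] [Fintype n] {ρ : Matrix n n 𝕜}

theorem trace_self_mul_conjTranspose_mul_nonneg (hρ : ρ.PosSemidef) (P : Matrix n n 𝕜) :
    0 ≤ (P * Pᴴ * ρ).trace := by
  rw [mul_assoc, trace_mul_comm]
  exact (hρ.conjTranspose_mul_mul_same P).trace_nonneg

theorem norm_trace_mul_mul_sq_le_s11 (hρ : ρ.PosSemidef) (P Q : Matrix n n 𝕜) :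
    ‖(P * Q * ρ).trace‖ ^ 2 ≤ RCLike.re (P * Pᴴ * ρ).trace * RCLike.re (Qᴴ * Q * ρ).trace := by
  let _ := ρ.toMatrixSeminormedAddCommGroup hρ
  let _ := ρ.toMatrixInnerProductSpace hρ
  have trace_eq_inner (X Y : Matrix n n 𝕜) : (X * Y * ρ).trace = inner 𝕜 Xᴴ Y := by
    change _ = (Y * ρ * Xᴴᴴ).trace
    rw [conjTranspose_conjTranspose, mul_assoc, trace_mul_comm, mul_assoc]
  have hQ := trace_eq_inner Qᴴ Q
  rw [conjTranspose_conjTranspose] at hQ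
  rw [trace_eq_inner, trace_eq_inner, hQ]
  simpa only [norm_inner_symm Q, ← sq] using inner_mul_inner_self_le (𝕜 := 𝕜) Pᴴ Q

end Matrix.PosSemidef

/-- **Combined multipartite Cauchy–Schwarz bound for uncorrelated states (Eq. (30), N = 3).**
For the product state `ρ = ρ₁ ⊗ ρ₂ ⊗ ρ₃`:
`|⟨P₁Q₁ ⊗ P₂Q₂ ⊗ P₃Q₃⟩|² ≤ ⟨P₁P₁† ⊗ Q₂†Q₂ ⊗ 𝟙⟩ ⟨𝟙 ⊗ P₂P₂† ⊗ Q₃†Q₃⟩ ⟨Q₁†Q₁ ⊗ 𝟙 ⊗ P₃P₃†⟩`. -/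
theorem uncorrelated_tripartite_combined_cauchy_schwarz {d₁ d₂ d₃ : ℕ}
    (ρ₁ : Matrix (Fin d₁) (Fin d₁) ℂ) (ρ₂ : Matrix (Fin d₂) (Fin d₂) ℂ)
    (ρ₃ : Matrix (Fin d₃) (Fin d₃) ℂ)
    (h₁ : IsDensityMatrix ρ₁) (h₂ : IsDensityMatrix ρ₂) (h₃ : IsDensityMatrix ρ₃)
    (P₁ Q₁ : Matrix (Fin d₁) (Fin d₁) ℂ) (P₂ Q₂ : Matrix (Fin d₂) (Fin d₂) ℂ)
    (P₃ Q₃ : Matrix (Fin d₃) (Fin d₃) ℂ) :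
    ‖(((P₁ * Q₁) ⊗ₖ ((P₂ * Q₂) ⊗ₖ (P₃ * Q₃))) *
        (ρ₁ ⊗ₖ (ρ₂ ⊗ₖ ρ₃))).trace‖ ^ 2 ≤
      ((((P₁ * P₁ᴴ) ⊗ₖ ((Q₂ᴴ * Q₂) ⊗ₖ (1 : Matrix (Fin d₃) (Fin d₃) ℂ))) *
        (ρ₁ ⊗ₖ (ρ₂ ⊗ₖ ρ₃))).trace).re *
      ((((1 : Matrix (Fin d₁) (Fin d₁) ℂ) ⊗ₖ ((P₂ * P₂ᴴ) ⊗ₖ (Q₃ᴴ * Q₃))) *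
        (ρ₁ ⊗ₖ (ρ₂ ⊗ₖ ρ₃))).trace).re *
      ((((Q₁ᴴ * Q₁) ⊗ₖ ((1 : Matrix (Fin d₂) (Fin d₂) ℂ) ⊗ₖ (P₃ * P₃ᴴ))) *
        (ρ₁ ⊗ₖ (ρ₂ ⊗ₖ ρ₃))).trace).re := by
  simp only [← mul_kronecker_mul, trace_kronecker, h₁.2, h₂.2, h₃.2, mul_one,
    one_mul, ← RCLike.re_to_complex]
  rw [RCLike.re_mul_of_nonneg (h₁.1.trace_self_mul_conjTranspose_mul_nonneg P₁),
    RCLike.re_mul_of_nonneg (h₂.1.trace_self_mul_conjTranspose_mul_nonneg P₂),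
    mul_comm (trace (Q₁ᴴ * Q₁ * ρ₁)),
    RCLike.re_mul_of_nonneg (h₃.1.trace_self_mul_conjTranspose_mul_nonneg P₃)]
  have cs₁ := h₁.1.norm_trace_mul_mul_sq_le_s11 P₁ Q₁
  have cs₂ := h₂.1.norm_trace_mul_mul_sq_le_s11 P₂ Q₂
  have cs₃ := h₃.1.norm_trace_mul_mul_sq_le_s11 P₃ Q₃
  calc _ = ‖(P₁ * Q₁ * ρ₁).trace‖ ^ 2 * ‖(P₂ * Q₂ * ρ₂).trace‖ ^ 2 *
        ‖(P₃ * Q₃ * ρ₃).trace‖ ^ 2 := by simp only [norm_mul, mul_pow, mul_assoc]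
    _ ≤ RCLike.re (P₁ * P₁ᴴ * ρ₁).trace * RCLike.re (Q₁ᴴ * Q₁ * ρ₁).trace *
        (RCLike.re (P₂ * P₂ᴴ * ρ₂).trace * RCLike.re (Q₂ᴴ * Q₂ * ρ₂).trace) *
        (RCLike.re (P₃ * P₃ᴴ * ρ₃).trace * RCLike.re (Q₃ᴴ * Q₃ * ρ₃).trace) := by
      gcongr
      exacts [mul_nonneg ((sq_nonneg _).trans cs₁) ((sq_nonneg _).trans cs₂),
        (sq_nonneg _).trans cs₁]
    _ = _ := by ring
end
end

section
/- Let ρ be a fully separable tripartite density matrix on ℂ^{dA}⊗ℂ^{dB}⊗ℂ^{dC}, and let A₁, A₂ (dA×dA), B₁, B₂ (dB×dB), C₁, C₂ (dC×dC) be complex matrices. Then |Tr((A₁A₂ ⊗ B₁B₂ ⊗ C₁C₂)ρ)|⁴ ≤ Re Tr((A₁A₁† ⊗ B₁B₁† ⊗ C₂†C₂)ρ) · Re Tr((A₁A₁† ⊗ B₂†B₂ ⊗ C₁C₁†)ρ) · Re Tr((A₂†A₂ ⊗ B₁B₁† ⊗ C₁C₁†)ρ) · Re Tr((A₂†A₂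 ⊗ B₂†B₂ ⊗ C₂†C₂)ρ). -/
/-!
On a product state the expectation factorises, and on each factor the Cauchy–Schwarz
inequality for the semi-inner product `⟪X, Y⟫ = tr (Y σ Xᴴ)` gives
`|tr (X₁ X₂ σ)|² ≤ tr (X₁ X₁ᴴ σ) · tr (X₂ᴴ X₂ σ)`. Multiplying the three factor bounds, the
`k`-th term `x_k` of the convex decomposition satisfies `x_k⁴ ≤ t₁ t₂ t₃ t₄`, where the `t_i` are
the `k`-th terms of the four expectations on the right; two rounds of the Cauchy–Schwarz inequality
for sums then give `(∑ x_k)⁴ ≤ ∏ᵢ ∑ t_i`.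
-/

open Matrix
open scoped Kronecker ComplexOrder

noncomputable section

/-- A tripartite state is fully separable if it is a finite convex combination of
Kronecker products of density matrices on the three factors. -/
def FullySeparable {dA dB dC : ℕ}
    (ρ : Matrix (Fin dA × Fin dB × Fin dC) (Fin dA × Fin dB × Fin dC) ℂ) : Prop :=
  ∃ (n : ℕ) (p : Fin n → ℝ) (ρA : Fin n → Matrix (Fin dA) (Fin dA) ℂ)
    (ρB : Fin n → Matrix (Fin dB) (Fin dB) ℂ) (ρC : Fin n → Matrix (Fin dC) (Fin dC) ℂ),
    (∀ k, 0 ≤ p k) ∧ (∑ k, p k = 1) ∧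
    (∀ k, IsDensityMatrix (ρA k)) ∧ (∀ k, IsDensityMatrix (ρB k)) ∧
    (∀ k, IsDensityMatrix (ρC k)) ∧
    ρ = ∑ k, (p k : ℂ) • (ρA k ⊗ₖ (ρB k ⊗ₖ ρC k))

theorem Finset.sum_pow_four_le_prod_sum {ι : Type*} (s : Finset ι) {x t₁ t₂ t₃ t₄ : ι → ℝ}
    (h₁ : ∀ k ∈ s, 0 ≤ t₁ k) (h₂ : ∀ k ∈ s, 0 ≤ t₂ k)
    (h₃ : ∀ k ∈ s, 0 ≤ t₃ k) (h₄ : ∀ k ∈ s, 0 ≤ t₄ k)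
    (h : ∀ k ∈ s, x k ^ 4 ≤ t₁ k * t₂ k * t₃ k * t₄ k) :
    (∑ k ∈ s, x k) ^ 4 ≤
      (∑ k ∈ s, t₁ k) * (∑ k ∈ s, t₂ k) * (∑ k ∈ s, t₃ k) * (∑ k ∈ s, t₄ k) := by
  set u := fun k => √(t₁ k * t₂ k)
  set v := fun k => √(t₃ k * t₄ k)
  have hu : (∑ k ∈ s, u k) ^ 2 ≤ (∑ k ∈ s, t₁ k) * ∑ k ∈ s, t₂ k :=
    sum_sq_le_sum_mul_sum_of_sq_le_mul s h₁ h₂ fun k hk =>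
      (Real.sq_sqrt (mul_nonneg (h₁ k hk) (h₂ k hk))).le
  have hv : (∑ k ∈ s, v k) ^ 2 ≤ (∑ k ∈ s, t₃ k) * ∑ k ∈ s, t₄ k :=
    sum_sq_le_sum_mul_sum_of_sq_le_mul s h₃ h₄ fun k hk =>
      (Real.sq_sqrt (mul_nonneg (h₃ k hk) (h₄ k hk))).le
  have hxuv : (∑ k ∈ s, x k) ^ 2 ≤ (∑ k ∈ s, u k) * ∑ k ∈ s, v k := by
    refine sum_sq_le_sum_mul_sum_of_sq_le_mul s (fun k _ => Real.sqrt_nonneg _)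
      (fun k _ => Real.sqrt_nonneg _) fun k hk => ?_
    rw [← Real.sqrt_mul (mul_nonneg (h₁ k hk) (h₂ k hk)), ← mul_assoc]
    exact Real.le_sqrt_of_sq_le (by rw [← pow_mul]; exact h k hk)
  calc (∑ k ∈ s, x k) ^ 4 = ((∑ k ∈ s, x k) ^ 2) ^ 2 := by ring
    _ ≤ ((∑ k ∈ s, u k) * ∑ k ∈ s, v k) ^ 2 := by gcongr
    _ = (∑ k ∈ s, u k) ^ 2 * (∑ k ∈ s, v k) ^ 2 := mul_pow _ _ 2
    _ ≤ _ := by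
      rw [mul_assoc _ (∑ k ∈ s, t₃ k)]
      gcongr
      exact mul_nonneg (sum_nonneg h₁) (sum_nonneg h₂)

namespace Matrix

variable {𝕜 n : Type*} [RCLike 𝕜] [Fintype n]

open scoped MatrixOrder in
theorem PosSemidef.trace_mul_nonneg_s12 [DecidableEq n] {M σ : Matrix n n 𝕜} (hM : M.PosSemidef)
    (hσ : σ.PosSemidef) :
    0 ≤ (M * σ).trace := by
  obtain ⟨B, rfl⟩ := CStarAlgebra.nonneg_iff_eq_star_mul_self.mp hM.nonneg
  rw [star_eq_conjTranspose, Matrix.mul_assoc, trace_mul_comm]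
  exact (hσ.mul_mul_conjTranspose_same B).trace_nonneg

theorem PosSemidef.norm_trace_mul_mul_sq_le_s12 {σ : Matrix n n 𝕜} (hσ : σ.PosSemidef)
    (X Y : Matrix n n 𝕜) :
    ‖(X * Y * σ).trace‖ ^ 2 ≤
      RCLike.re (X * Xᴴ * σ).trace * RCLike.re (Yᴴ * Y * σ).trace := by
  let := σ.toMatrixSeminormedAddCommGroup hσ
  let := σ.toMatrixInnerProductSpace hσ
  have h := inner_mul_inner_self_le (𝕜 := 𝕜) Xᴴ Y
  rw [norm_inner_symm Y, ← sq] at h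
  change ‖(Y * σ * Xᴴᴴ).trace‖ ^ 2 ≤
    RCLike.re (Xᴴ * σ * Xᴴᴴ).trace * RCLike.re (Y * σ * Yᴴ).trace at h
  rwa [conjTranspose_conjTranspose, trace_mul_cycle Y, trace_mul_cycle Xᴴ, trace_mul_cycle Y] at h

theorem trace_kronecker_mul_sum {R ι α β γ : Type*} [CommSemiring R] [Fintype α] [Fintype β]
    [Fintype γ] (s : Finset ι) (c : ι → R) (M : Matrix α α R) (N : Matrix β β R)
    (P : Matrix γ γ R) (ρA : ι → Matrix α α R) (ρB : ι → Matrix β β R) (ρC : ι → Matrix γ γ R) :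
    ((M ⊗ₖ (N ⊗ₖ P)) * ∑ k ∈ s, c k • (ρA k ⊗ₖ (ρB k ⊗ₖ ρC k))).trace =
      ∑ k ∈ s, c k * ((M * ρA k).trace * ((N * ρB k).trace * (P * ρC k).trace)) := by
  rw [Finset.mul_sum, trace_sum]
  refine Finset.sum_congr rfl fun k _ => ?_
  rw [Matrix.mul_smul, trace_smul, ← mul_kronecker_mul, ← mul_kronecker_mul, trace_kronecker,
    trace_kronecker, smul_eq_mul]

end Matrix

theorem mul_mul_mul_pow_four_le {p a b c α β γ δ ε ζ : ℝ} (ha : a ^ 2 ≤ α * β)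
    (hb : b ^ 2 ≤ γ * δ) (hc : c ^ 2 ≤ ε * ζ) :
    (p * (a * (b * c))) ^ 4 ≤
      p * (α * (γ * ζ)) * (p * (α * (δ * ε))) * (p * (β * (γ * ε))) * (p * (β * (δ * ζ))) :=
  calc (p * (a * (b * c))) ^ 4 = p ^ 4 * ((a ^ 2) ^ 2 * ((b ^ 2) ^ 2 * (c ^ 2) ^ 2)) := by ring
    _ ≤ p ^ 4 * ((α * β) ^ 2 * ((γ * δ) ^ 2 * (ε * ζ) ^ 2)) := by gcongr
    _ = _ := by ring

theorem Complex.re_ofReal_mul_mul_mul_of_nonneg (p : ℝ) {u v w : ℂ} (hu : 0 ≤ u) (hv : 0 ≤ v)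
    (hw : 0 ≤ w) :
    ((p : ℂ) * (u * (v * w))).re = p * (u.re * (v.re * w.re)) := by
  rw [Complex.nonneg_iff] at hu hv hw
  simp [Complex.mul_re, Complex.mul_im, ← hu.2, ← hv.2, ← hw.2]

theorem norm_sum_pow_four_le_re_sum {ι : Type*} (s : Finset ι) {p : ι → ℝ}
    {a b c α β γ δ ε ζ : ι → ℂ}
    (hp : ∀ k ∈ s, 0 ≤ p k) (hα : ∀ k ∈ s, 0 ≤ α k) (hβ : ∀ k ∈ s, 0 ≤ β k)
    (hγ : ∀ k ∈ s, 0 ≤ γ k) (hδ : ∀ k ∈ s, 0 ≤ δ k) (hε : ∀ k ∈ s, 0 ≤ ε k)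
    (hζ : ∀ k ∈ s, 0 ≤ ζ k)
    (ha : ∀ k ∈ s, ‖a k‖ ^ 2 ≤ (α k).re * (β k).re)
    (hb : ∀ k ∈ s, ‖b k‖ ^ 2 ≤ (γ k).re * (δ k).re)
    (hc : ∀ k ∈ s, ‖c k‖ ^ 2 ≤ (ε k).re * (ζ k).re) :
    ‖∑ k ∈ s, (p k : ℂ) * (a k * (b k * c k))‖ ^ 4 ≤
      (∑ k ∈ s, (p k : ℂ) * (α k * (γ k * ζ k))).re *
      (∑ k ∈ s, (p k : ℂ) * (α k * (δ k * ε k))).re *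
      (∑ k ∈ s, (p k : ℂ) * (β k * (γ k * ε k))).re *
      (∑ k ∈ s, (p k : ℂ) * (β k * (δ k * ζ k))).re := by
  have re_sum {u v w : ι → ℂ} (hu : ∀ k ∈ s, 0 ≤ u k) (hv : ∀ k ∈ s, 0 ≤ v k)
      (hw : ∀ k ∈ s, 0 ≤ w k) :
      (∑ k ∈ s, (p k : ℂ) * (u k * (v k * w k))).re =
        ∑ k ∈ s, p k * ((u k).re * ((v k).re * (w k).re)) := by
    rw [Complex.re_sum]
    exact Finset.sum_congr rfl fun k hk =>
      Complex.re_ofReal_mul_mul_mul_of_nonneg _ (hu k hk) (hv k hk) (hw k hk)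
  have term_nonneg {u v w : ι → ℂ} (hu : ∀ k ∈ s, 0 ≤ u k) (hv : ∀ k ∈ s, 0 ≤ v k)
      (hw : ∀ k ∈ s, 0 ≤ w k) : ∀ k ∈ s, 0 ≤ p k * ((u k).re * ((v k).re * (w k).re)) :=
    fun k hk => mul_nonneg (hp k hk) <| mul_nonneg (Complex.nonneg_iff.1 (hu k hk)).1 <|
      mul_nonneg (Complex.nonneg_iff.1 (hv k hk)).1 (Complex.nonneg_iff.1 (hw k hk)).1
  have hnorm : ‖∑ k ∈ s, (p k : ℂ) * (a k * (b k * c k))‖ ≤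
      ∑ k ∈ s, p k * (‖a k‖ * (‖b k‖ * ‖c k‖)) := by
    refine (norm_sum_le _ _).trans_eq (Finset.sum_congr rfl fun k hk => ?_)
    simp [abs_of_nonneg (hp k hk)]
  rw [re_sum hα hγ hζ, re_sum hα hδ hε, re_sum hβ hγ hε, re_sum hβ hδ hζ]
  exact (pow_le_pow_left₀ (norm_nonneg _) hnorm 4).trans <|
    Finset.sum_pow_four_le_prod_sum s (term_nonneg hα hγ hζ) (term_nonneg hα hδ hε)
      (term_nonneg hβ hγ hε) (term_nonneg hβ hδ hζ) fun k hk =>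
        mul_mul_mul_pow_four_le (ha k hk) (hb k hk) (hc k hk)

theorem fully_separable_fourth_power_criterion_general {dA dB dC : ℕ}
    (ρ : Matrix (Fin dA × Fin dB × Fin dC) (Fin dA × Fin dB × Fin dC) ℂ)
    (hsep : FullySeparable ρ)
    (A₁ A₂ : Matrix (Fin dA) (Fin dA) ℂ) (B₁ B₂ : Matrix (Fin dB) (Fin dB) ℂ)
    (C₁ C₂ : Matrix (Fin dC) (Fin dC) ℂ) :
    ‖(((A₁ * A₂) ⊗ₖ ((B₁ * B₂) ⊗ₖ (C₁ * C₂))) * ρ).trace‖ ^ 4 ≤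
      ((((A₁ * A₁ᴴ) ⊗ₖ ((B₁ * B₁ᴴ) ⊗ₖ (C₂ᴴ * C₂))) * ρ).trace).re *
      ((((A₁ * A₁ᴴ) ⊗ₖ ((B₂ᴴ * B₂) ⊗ₖ (C₁ * C₁ᴴ))) * ρ).trace).re *
      ((((A₂ᴴ * A₂) ⊗ₖ ((B₁ * B₁ᴴ) ⊗ₖ (C₁ * C₁ᴴ))) * ρ).trace).re *
      ((((A₂ᴴ * A₂) ⊗ₖ ((B₂ᴴ * B₂) ⊗ₖ (C₂ᴴ * C₂))) * ρ).trace).re := by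
  obtain ⟨n, p, ρA, ρB, ρC, hp, -, hA, hB, hC, rfl⟩ := hsep
  simp only [trace_kronecker_mul_sum]
  have trace_nonneg {m : ℕ} {σ : Fin n → Matrix (Fin m) (Fin m) ℂ}
      (hσ : ∀ k, IsDensityMatrix (σ k)) {M : Matrix (Fin m) (Fin m) ℂ} (hM : M.PosSemidef) :
      ∀ k ∈ Finset.univ, 0 ≤ (M * σ k).trace :=
    fun k _ => hM.trace_mul_nonneg_s12 (hσ k).1
  have cauchy_schwarz {m : ℕ} {σ : Fin n → Matrix (Fin m) (Fin m) ℂ}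
      (hσ : ∀ k, IsDensityMatrix (σ k)) (X Y : Matrix (Fin m) (Fin m) ℂ) :
      ∀ k ∈ Finset.univ,
        ‖(X * Y * σ k).trace‖ ^ 2 ≤ (X * Xᴴ * σ k).trace.re * (Yᴴ * Y * σ k).trace.re :=
    fun k _ => (hσ k).1.norm_trace_mul_mul_sq_le_s12 X Y
  exact norm_sum_pow_four_le_re_sum _ (fun k _ => hp k)
    (trace_nonneg hA (posSemidef_self_mul_conjTranspose A₁))
    (trace_nonneg hA (posSemidef_conjTranspose_mul_self A₂))
    (trace_nonneg hB (posSemidef_self_mul_conjTranspose B₁))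
    (trace_nonneg hB (posSemidef_conjTranspose_mul_self B₂))
    (trace_nonneg hC (posSemidef_self_mul_conjTranspose C₁))
    (trace_nonneg hC (posSemidef_conjTranspose_mul_self C₂))
    (cauchy_schwarz hA A₁ A₂) (cauchy_schwarz hB B₁ B₂) (cauchy_schwarz hC C₁ C₂)

/-- **The tripartite criterion Eq. (38).**  For every fully separable tripartite state,
`|⟨A₁A₂ ⊗ B₁B₂ ⊗ C₁C₂⟩|⁴ ≤ ⟨A₁A₁†⊗B₁B₁†⊗C₂†C₂⟩ ⟨A₁A₁†⊗B₂†B₂⊗C₁C₁†⟩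
⟨A₂†A₂⊗B₁B₁†⊗C₁C₁†⟩ ⟨A₂†A₂⊗B₂†B₂⊗C₂†C₂⟩`. -/
theorem fully_separable_fourth_power_criterion {dA dB dC : ℕ}
    (ρ : Matrix (Fin dA × Fin dB × Fin dC) (Fin dA × Fin dB × Fin dC) ℂ)
    (hρ : IsDensityMatrix ρ) (hsep : FullySeparable ρ)
    (A₁ A₂ : Matrix (Fin dA) (Fin dA) ℂ) (B₁ B₂ : Matrix (Fin dB) (Fin dB) ℂ)
    (C₁ C₂ : Matrix (Fin dC) (Fin dC) ℂ) :
    ‖(((A₁ * A₂) ⊗ₖ ((B₁ * B₂) ⊗ₖ (C₁ * C₂))) * ρ).trace‖ ^ 4 ≤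
      ((((A₁ * A₁ᴴ) ⊗ₖ ((B₁ * B₁ᴴ) ⊗ₖ (C₂ᴴ * C₂))) * ρ).trace).re *
      ((((A₁ * A₁ᴴ) ⊗ₖ ((B₂ᴴ * B₂) ⊗ₖ (C₁ * C₁ᴴ))) * ρ).trace).re *
      ((((A₂ᴴ * A₂) ⊗ₖ ((B₁ * B₁ᴴ) ⊗ₖ (C₁ * C₁ᴴ))) * ρ).trace).re *
      ((((A₂ᴴ * A₂) ⊗ₖ ((B₂ᴴ * B₂) ⊗ₖ (C₂ᴴ * C₂))) * ρ).trace).re :=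
  fully_separable_fourth_power_criterion_general ρ hsep A₁ A₂ B₁ B₂ C₁ C₂
end
end

section
/- Let ρ be a fully separable tripartite density matrix on ℂ^{dA}⊗ℂ^{dB}⊗ℂ^{dC}, and let A₁, A₂ (dA×dA), B₁, B₂ (dB×dB), C₁, C₂ (dC×dC) be complex matrices. Then |Tr((A₁A₂ ⊗ B₁B₂ ⊗ C₁C₂)ρ)|⁶ ≤ Re Tr((A₂†A₂ ⊗ B₂†B₂ ⊗ C₁C₁†)ρ) · Re Tr((A₂†A₂ ⊗ B₁B₁† ⊗ C₂†C₂)ρ) · Re Tr((A₁A₁† ⊗ B₂†B₂ ⊗ C₁C₁†)ρ) · Re Tr((A₁A₁† ⊗ B₂†B₂ ⊗ C₂†C₂)ρ) · Re Tr((A₂†A₂ ⊗ B₁B₁† ⊗ C₁C₁†)ρ) · Re Tr((A₁A₁† ⊗ B₁B₁† ⊗ C₂†C₂)ρ). -/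
open Matrix
open scoped Kronecker ComplexOrder

noncomputable section

/-!
On a product state `σA ⊗ σB ⊗ σC` every expectation value factorises, and Cauchy–Schwarz for the
semi-inner product `⟪X, Y⟫ = Tr (Xᴴ Y σ)` gives `|⟨A₁A₂⟩|² ≤ ⟨A₁A₁ᴴ⟩ ⟨A₂ᴴA₂⟩` on each party. Each
of the six single-party factors occurs in exactly three of the six observables on the right, so for
product states the criterion is the cube of the product of the three Cauchy–Schwarz inequalities.
A separable state is a mixture `∑ pₖ σₖ` of product states, and the bound survives mixing: the
triangle inequality on the left and the generalized Hölder inequality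
`(∑ pₖ uₖ)^m ≤ ∏ᵢ ∑ pₖ Tᵢₖ` (valid when `uₖ^m ≤ ∏ᵢ Tᵢₖ`) on the right.
-/

open Finset

namespace Real

variable {ι κ : Type*} [Fintype ι] [Fintype κ] {w u : κ → ℝ} {f : ι → κ → ℝ}

theorem sum_mul_le_prod_sum_rpow_of_pos [Nonempty ι] (hw : ∀ k, 0 ≤ w k) (hu : ∀ k, 0 ≤ u k)
    (hf : ∀ i k, 0 ≤ f i k) (hfu : ∀ k, u k ^ Fintype.card ι ≤ ∏ i, f i k)
    (hS : ∀ i, 0 < ∑ k, w k * f i k) :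
    ∑ k, w k * u k ≤ ∏ i, (∑ k, w k * f i k) ^ (Fintype.card ι : ℝ)⁻¹ := by
  set c : ℝ := (Fintype.card ι : ℝ)⁻¹
  set S : ι → ℝ := fun i ↦ ∑ k, w k * f i k
  set G : ℝ := ∏ i, S i ^ c
  have hc : 0 ≤ c := by positivity
  have hc_sum : ∑ _i : ι, c = 1 := by simp [c, card_univ]
  have pointwise (k : κ) : u k ≤ G * ∑ i, c * (f i k / S i) := calc
    u k ≤ ∏ i, f i k ^ c := by
      rw [finsetProd_rpow _ _ fun i _ ↦ hf i k,
        ← pow_rpow_inv_natCast (hu k) (Fintype.card_ne_zero (α := ι))]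
      exact rpow_le_rpow (pow_nonneg (hu k) _) (hfu k) hc
    _ = G * ∏ i, (f i k / S i) ^ c := by
      rw [← prod_mul_distrib]
      refine prod_congr rfl fun i _ ↦ ?_
      rw [← mul_rpow (hS i).le (div_nonneg (hf i k) (hS i).le),
        mul_div_cancel₀ _ (hS i).ne']
    _ ≤ G * ∑ i, c * (f i k / S i) := by
      gcongr
      · exact prod_nonneg fun i _ ↦ rpow_nonneg (hS i).le c
      · exact geom_mean_le_arith_mean_weighted _ _ _ (fun _ _ ↦ hc) hc_sum
          fun i _ ↦ div_nonneg (hf i k) (hS i).le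
  calc ∑ k, w k * u k ≤ ∑ k, w k * (G * ∑ i, c * (f i k / S i)) :=
        sum_le_sum fun k _ ↦ mul_le_mul_of_nonneg_left (pointwise k) (hw k)
    _ = G * ∑ i, c * (S i / S i) := by
      simp only [mul_sum]
      rw [sum_comm]
      refine sum_congr rfl fun i _ ↦ ?_
      simp only [S, sum_div, mul_sum]
      exact sum_congr rfl fun k _ ↦ by ring
    _ = G := by
      rw [sum_congr rfl fun i _ ↦ by rw [div_self (hS i).ne', mul_one], hc_sum, mul_one]

theorem sum_mul_pow_card_le_prod_sum (hw : ∀ k, 0 ≤ w k) (hu : ∀ k, 0 ≤ u k)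
    (hf : ∀ i k, 0 ≤ f i k) (hfu : ∀ k, u k ^ Fintype.card ι ≤ ∏ i, f i k) :
    (∑ k, w k * u k) ^ Fintype.card ι ≤ ∏ i, ∑ k, w k * f i k := by
  rcases isEmpty_or_nonempty ι with hι | hι
  · simp
  have hS_nonneg (i : ι) : 0 ≤ ∑ k, w k * f i k :=
    sum_nonneg fun k _ ↦ mul_nonneg (hw k) (hf i k)
  by_cases hS : ∀ i, 0 < ∑ k, w k * f i k
  · calc (∑ k, w k * u k) ^ Fintype.card ι
          ≤ (∏ i, (∑ k, w k * f i k) ^ (Fintype.card ι : ℝ)⁻¹) ^ Fintype.card ι :=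
          pow_le_pow_left₀ (sum_nonneg fun k _ ↦ mul_nonneg (hw k) (hu k))
            (sum_mul_le_prod_sum_rpow_of_pos hw hu hf hfu hS) _
      _ = ∏ i, ∑ k, w k * f i k := by
          rw [← prod_pow]
          exact prod_congr rfl fun i _ ↦ rpow_inv_natCast_pow (hS_nonneg i)
            Fintype.card_ne_zero
  · simp only [not_forall, not_lt] at hS
    obtain ⟨i, hi⟩ := hS
    have hwf (k : κ) : w k * f i k = 0 :=
      (sum_eq_zero_iff_of_nonneg fun k _ ↦ mul_nonneg (hw k) (hf i k)).mp
        (hi.antisymm (hS_nonneg i)) k (mem_univ k)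
    have hwu (k : κ) : w k * u k = 0 := by
      rcases mul_eq_zero.mp (hwf k) with h | h
      · rw [h, zero_mul]
      · have : u k ^ Fintype.card ι ≤ 0 := (hfu k).trans_eq (prod_eq_zero (mem_univ i) h)
        rw [pow_eq_zero_iff Fintype.card_ne_zero |>.mp
          (this.antisymm (pow_nonneg (hu k) _)), mul_zero]
    rw [sum_eq_zero fun k _ ↦ hwu k, zero_pow Fintype.card_ne_zero]
    exact prod_nonneg fun i _ ↦ hS_nonneg i

end Real

open scoped MatrixOrder Matrix.Norms.L2Operator in
theorem Matrix.PosSemidef.trace_mul_nonneg_s13 {n : Type*} [Fintype n] {P σ : Matrix n n ℂ}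
    (hP : P.PosSemidef) (hσ : σ.PosSemidef) : 0 ≤ (P * σ).trace := by
  classical
  obtain ⟨B, rfl⟩ := CStarAlgebra.nonneg_iff_eq_star_mul_self.mp hP.nonneg
  rw [star_eq_conjTranspose, Matrix.mul_assoc, trace_mul_comm, Matrix.mul_assoc]
  simpa [Matrix.mul_assoc] using (hσ.mul_mul_conjTranspose_same B).trace_nonneg

theorem Matrix.PosSemidef.trace_mul_eq_re {n : Type*} [Fintype n] {P σ : Matrix n n ℂ}
    (hP : P.PosSemidef) (hσ : σ.PosSemidef) : (P * σ).trace = ((P * σ).trace.re : ℂ) :=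
  Complex.eq_re_of_ofReal_le (r := 0) (Complex.ofReal_zero ▸ hP.trace_mul_nonneg_s13 hσ)

theorem Matrix.PosSemidef.norm_trace_mul_mul_sq_le_s13 {n : Type*} [Fintype n] {σ : Matrix n n ℂ}
    (hσ : σ.PosSemidef) (X Y : Matrix n n ℂ) :
    ‖(X * Y * σ).trace‖ ^ 2 ≤ (X * Xᴴ * σ).trace.re * (Yᴴ * Y * σ).trace.re := by
  let := σ.toMatrixSeminormedAddCommGroup hσ
  let := σ.toMatrixInnerProductSpace hσ
  have inner_eq (x y : Matrix n n ℂ) : inner ℂ x y = (xᴴ * y * σ).trace :=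
    trace_mul_cycle y σ xᴴ
  have h := inner_mul_inner_self_le (𝕜 := ℂ) Xᴴ Y
  rw [norm_inner_symm Y, ← sq] at h
  simpa only [inner_eq, conjTranspose_conjTranspose, RCLike.re_to_complex] using h

theorem pow_six_le_of_sq_le_mul {x y z a₁ a₂ b₁ b₂ c₁ c₂ : ℝ} (hx : x ^ 2 ≤ a₁ * a₂)
    (hy : y ^ 2 ≤ b₁ * b₂) (hz : z ^ 2 ≤ c₁ * c₂) :
    (x * (y * z)) ^ 6 ≤ a₂ * (b₂ * c₁) * (a₂ * (b₁ * c₂)) * (a₁ * (b₂ * c₁)) *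
      (a₁ * (b₂ * c₂)) * (a₂ * (b₁ * c₁)) * (a₁ * (b₁ * c₂)) := calc
  (x * (y * z)) ^ 6 = (x ^ 2 * (y ^ 2 * z ^ 2)) ^ 3 := by ring
  _ ≤ (a₁ * a₂ * (b₁ * b₂ * (c₁ * c₂))) ^ 3 := by
    have := (sq_nonneg x).trans hx
    have := (sq_nonneg y).trans hy
    gcongr
  _ = _ := by ring

theorem norm_trace_kronecker_mul_kronecker_pow_six_le {l m n : Type*} [Fintype l] [Fintype m]
    [Fintype n] {σA : Matrix l l ℂ} {σB : Matrix m m ℂ} {σC : Matrix n n ℂ}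
    (hA : σA.PosSemidef) (hB : σB.PosSemidef) (hC : σC.PosSemidef)
    (A₁ A₂ : Matrix l l ℂ) (B₁ B₂ : Matrix m m ℂ) (C₁ C₂ : Matrix n n ℂ) :
    ‖(((A₁ * A₂) ⊗ₖ ((B₁ * B₂) ⊗ₖ (C₁ * C₂))) * (σA ⊗ₖ (σB ⊗ₖ σC))).trace‖ ^ 6 ≤
      ((((A₂ᴴ * A₂) ⊗ₖ ((B₂ᴴ * B₂) ⊗ₖ (C₁ * C₁ᴴ))) * (σA ⊗ₖ (σB ⊗ₖ σC))).trace).re *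
      ((((A₂ᴴ * A₂) ⊗ₖ ((B₁ * B₁ᴴ) ⊗ₖ (C₂ᴴ * C₂))) * (σA ⊗ₖ (σB ⊗ₖ σC))).trace).re *
      ((((A₁ * A₁ᴴ) ⊗ₖ ((B₂ᴴ * B₂) ⊗ₖ (C₁ * C₁ᴴ))) * (σA ⊗ₖ (σB ⊗ₖ σC))).trace).re *
      ((((A₁ * A₁ᴴ) ⊗ₖ ((B₂ᴴ * B₂) ⊗ₖ (C₂ᴴ * C₂))) * (σA ⊗ₖ (σB ⊗ₖ σC))).trace).re *
      ((((A₂ᴴ * A₂) ⊗ₖ ((B₁ * B₁ᴴ) ⊗ₖ (C₁ * C₁ᴴ))) * (σA ⊗ₖ (σB ⊗ₖ σC))).trace).re *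
      ((((A₁ * A₁ᴴ) ⊗ₖ ((B₁ * B₁ᴴ) ⊗ₖ (C₂ᴴ * C₂))) * (σA ⊗ₖ (σB ⊗ₖ σC))).trace).re := by
  simp only [← mul_kronecker_mul, trace_kronecker]
  rw [(posSemidef_self_mul_conjTranspose A₁).trace_mul_eq_re hA,
    (posSemidef_conjTranspose_mul_self A₂).trace_mul_eq_re hA,
    (posSemidef_self_mul_conjTranspose B₁).trace_mul_eq_re hB,
    (posSemidef_conjTranspose_mul_self B₂).trace_mul_eq_re hB,
    (posSemidef_self_mul_conjTranspose C₁).trace_mul_eq_re hC,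
    (posSemidef_conjTranspose_mul_self C₂).trace_mul_eq_re hC]
  simp only [← Complex.ofReal_mul, Complex.ofReal_re, norm_mul]
  exact pow_six_le_of_sq_le_mul (hA.norm_trace_mul_mul_sq_le_s13 A₁ A₂)
    (hB.norm_trace_mul_mul_sq_le_s13 B₁ B₂) (hC.norm_trace_mul_mul_sq_le_s13 C₁ C₂)

theorem norm_trace_mul_pow_card_le_prod_of_mixture {ι κ n : Type*} [Fintype ι] [Fintype κ]
    [Fintype n] {p : κ → ℝ} {σ : κ → Matrix n n ℂ} (hp : ∀ k, 0 ≤ p k)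
    (hσ : ∀ k, (σ k).PosSemidef) (O₀ : Matrix n n ℂ) {O : ι → Matrix n n ℂ}
    (hO : ∀ i, (O i).PosSemidef)
    (hbound : ∀ k, ‖(O₀ * σ k).trace‖ ^ Fintype.card ι ≤ ∏ i, (O i * σ k).trace.re) :
    ‖(O₀ * ∑ k, (p k : ℂ) • σ k).trace‖ ^ Fintype.card ι ≤
      ∏ i, (O i * ∑ k, (p k : ℂ) • σ k).trace.re := by
  have trace_mixture (P : Matrix n n ℂ) :
      (P * ∑ k, (p k : ℂ) • σ k).trace = ∑ k, (p k : ℂ) * (P * σ k).trace := by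
    simp only [Matrix.mul_sum, Matrix.mul_smul, trace_sum, trace_smul, smul_eq_mul]
  have hnorm : ‖(O₀ * ∑ k, (p k : ℂ) • σ k).trace‖ ≤ ∑ k, p k * ‖(O₀ * σ k).trace‖ := by
    rw [trace_mixture]
    refine (norm_sum_le _ _).trans_eq (Finset.sum_congr rfl fun k _ ↦ ?_)
    rw [norm_mul, Complex.norm_real, Real.norm_of_nonneg (hp k)]
  calc ‖(O₀ * ∑ k, (p k : ℂ) • σ k).trace‖ ^ Fintype.card ι
      ≤ (∑ k, p k * ‖(O₀ * σ k).trace‖) ^ Fintype.card ι :=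
        pow_le_pow_left₀ (norm_nonneg _) hnorm _
    _ ≤ ∏ i, ∑ k, p k * (O i * σ k).trace.re :=
        Real.sum_mul_pow_card_le_prod_sum hp (fun k ↦ norm_nonneg _)
          (fun i k ↦ Complex.nonneg_iff.mp ((hO i).trace_mul_nonneg_s13 (hσ k)) |>.1) hbound
    _ = ∏ i, (O i * ∑ k, (p k : ℂ) • σ k).trace.re := by
        simp only [trace_mixture, Complex.re_sum, Complex.re_ofReal_mul]

theorem fully_separable_sixth_power_criterion_general {dA dB dC : ℕ}
    (ρ : Matrix (Fin dA × Fin dB × Fin dC) (Fin dA × Fin dB × Fin dC) ℂ)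
    (hsep : FullySeparable ρ)
    (A₁ A₂ : Matrix (Fin dA) (Fin dA) ℂ) (B₁ B₂ : Matrix (Fin dB) (Fin dB) ℂ)
    (C₁ C₂ : Matrix (Fin dC) (Fin dC) ℂ) :
    ‖(((A₁ * A₂) ⊗ₖ ((B₁ * B₂) ⊗ₖ (C₁ * C₂))) * ρ).trace‖ ^ 6 ≤
      ((((A₂ᴴ * A₂) ⊗ₖ ((B₂ᴴ * B₂) ⊗ₖ (C₁ * C₁ᴴ))) * ρ).trace).re *
      ((((A₂ᴴ * A₂) ⊗ₖ ((B₁ * B₁ᴴ) ⊗ₖ (C₂ᴴ * C₂))) * ρ).trace).re *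
      ((((A₁ * A₁ᴴ) ⊗ₖ ((B₂ᴴ * B₂) ⊗ₖ (C₁ * C₁ᴴ))) * ρ).trace).re *
      ((((A₁ * A₁ᴴ) ⊗ₖ ((B₂ᴴ * B₂) ⊗ₖ (C₂ᴴ * C₂))) * ρ).trace).re *
      ((((A₂ᴴ * A₂) ⊗ₖ ((B₁ * B₁ᴴ) ⊗ₖ (C₁ * C₁ᴴ))) * ρ).trace).re *
      ((((A₁ * A₁ᴴ) ⊗ₖ ((B₁ * B₁ᴴ) ⊗ₖ (C₂ᴴ * C₂))) * ρ).trace).re := by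
  obtain ⟨n, p, ρA, ρB, ρC, hp, -, hA, hB, hC, rfl⟩ := hsep
  have hσ (k : Fin n) : (ρA k ⊗ₖ (ρB k ⊗ₖ ρC k)).PosSemidef :=
    (hA k).1.kronecker ((hB k).1.kronecker (hC k).1)
  let O : Fin 6 → Matrix (Fin dA × Fin dB × Fin dC) (Fin dA × Fin dB × Fin dC) ℂ :=
    ![(A₂ᴴ * A₂) ⊗ₖ ((B₂ᴴ * B₂) ⊗ₖ (C₁ * C₁ᴴ)), (A₂ᴴ * A₂) ⊗ₖ ((B₁ * B₁ᴴ) ⊗ₖ (C₂ᴴ * C₂)),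
      (A₁ * A₁ᴴ) ⊗ₖ ((B₂ᴴ * B₂) ⊗ₖ (C₁ * C₁ᴴ)), (A₁ * A₁ᴴ) ⊗ₖ ((B₂ᴴ * B₂) ⊗ₖ (C₂ᴴ * C₂)),
      (A₂ᴴ * A₂) ⊗ₖ ((B₁ * B₁ᴴ) ⊗ₖ (C₁ * C₁ᴴ)), (A₁ * A₁ᴴ) ⊗ₖ ((B₁ * B₁ᴴ) ⊗ₖ (C₂ᴴ * C₂))]
  have hA₁ := posSemidef_self_mul_conjTranspose A₁
  have hA₂ := posSemidef_conjTranspose_mul_self A₂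
  have hB₁ := posSemidef_self_mul_conjTranspose B₁
  have hB₂ := posSemidef_conjTranspose_mul_self B₂
  have hC₁ := posSemidef_self_mul_conjTranspose C₁
  have hC₂ := posSemidef_conjTranspose_mul_self C₂
  have hO (i : Fin 6) : (O i).PosSemidef := by
    fin_cases i
    exacts [hA₂.kronecker (hB₂.kronecker hC₁), hA₂.kronecker (hB₁.kronecker hC₂),
      hA₁.kronecker (hB₂.kronecker hC₁), hA₁.kronecker (hB₂.kronecker hC₂),
      hA₂.kronecker (hB₁.kronecker hC₁), hA₁.kronecker (hB₁.kronecker hC₂)]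
  have h := norm_trace_mul_pow_card_le_prod_of_mixture hp hσ
    ((A₁ * A₂) ⊗ₖ ((B₁ * B₂) ⊗ₖ (C₁ * C₂))) hO fun k ↦ by
      rw [Fintype.card_fin, Fin.prod_univ_six]
      exact norm_trace_kronecker_mul_kronecker_pow_six_le (hA k).1 (hB k).1 (hC k).1
        A₁ A₂ B₁ B₂ C₁ C₂
  rwa [Fintype.card_fin, Fin.prod_univ_six] at h

/-- **The tripartite criterion Eq. (60).**  For every fully separable tripartite state,
`|⟨A₁A₂ ⊗ B₁B₂ ⊗ C₁C₂⟩|⁶` is bounded by the product of the six expectation values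
`⟨A₂†A₂⊗B₂†B₂⊗C₁C₁†⟩ ⟨A₂†A₂⊗B₁B₁†⊗C₂†C₂⟩ ⟨A₁A₁†⊗B₂†B₂⊗C₁C₁†⟩
⟨A₁A₁†⊗B₂†B₂⊗C₂†C₂⟩ ⟨A₂†A₂⊗B₁B₁†⊗C₁C₁†⟩ ⟨A₁A₁†⊗B₁B₁†⊗C₂†C₂⟩`. -/
theorem fully_separable_sixth_power_criterion {dA dB dC : ℕ}
    (ρ : Matrix (Fin dA × Fin dB × Fin dC) (Fin dA × Fin dB × Fin dC) ℂ)
    (hρ : IsDensityMatrix ρ) (hsep : FullySeparable ρ)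
    (A₁ A₂ : Matrix (Fin dA) (Fin dA) ℂ) (B₁ B₂ : Matrix (Fin dB) (Fin dB) ℂ)
    (C₁ C₂ : Matrix (Fin dC) (Fin dC) ℂ) :
    ‖(((A₁ * A₂) ⊗ₖ ((B₁ * B₂) ⊗ₖ (C₁ * C₂))) * ρ).trace‖ ^ 6 ≤
      ((((A₂ᴴ * A₂) ⊗ₖ ((B₂ᴴ * B₂) ⊗ₖ (C₁ * C₁ᴴ))) * ρ).trace).re *
      ((((A₂ᴴ * A₂) ⊗ₖ ((B₁ * B₁ᴴ) ⊗ₖ (C₂ᴴ * C₂))) * ρ).trace).re *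
      ((((A₁ * A₁ᴴ) ⊗ₖ ((B₂ᴴ * B₂) ⊗ₖ (C₁ * C₁ᴴ))) * ρ).trace).re *
      ((((A₁ * A₁ᴴ) ⊗ₖ ((B₂ᴴ * B₂) ⊗ₖ (C₂ᴴ * C₂))) * ρ).trace).re *
      ((((A₂ᴴ * A₂) ⊗ₖ ((B₁ * B₁ᴴ) ⊗ₖ (C₁ * C₁ᴴ))) * ρ).trace).re *
      ((((A₁ * A₁ᴴ) ⊗ₖ ((B₁ * B₁ᴴ) ⊗ₖ (C₂ᴴ * C₂))) * ρ).trace).re :=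
  fully_separable_sixth_power_criterion_general ρ hsep A₁ A₂ B₁ B₂ C₁ C₂
end
end

section
/- Let a, b, c > 0 be real numbers and set n = 2 + a + b + c + 1/a + 1/b + 1/c. Define the three-qubit state ρ_abc on ℂ²⊗ℂ²⊗ℂ² (matrix indexed by the basis |000⟩, |001⟩, |010⟩, |011⟩, |100⟩, |101⟩, |110⟩, |111⟩) as the matrix whose diagonal entries are (1, a, b, 1/c, c, 1/b, 1/a, 1)/n, whose (|000⟩,|111⟩) and (|111⟩,|000⟩) entries are 1/n, and all of whose other entries are 0. If abc ≠ 1, then ρ_abc is not fully separable. -/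
open Matrix
open scoped Kronecker ComplexOrder

noncomputable section

/-- The diagonal entries `(1, a, b, 1/c, c, 1/b, 1/a, 1)` of the (unnormalized) state
`ρ_abc` of Acín et al., indexed by the three-qubit product basis `|000⟩, …, |111⟩`. -/
def rhoAbcDiag (a b c : ℝ) (x : Fin 2 × Fin 2 × Fin 2) : ℝ :=
  if x = (0, 0, 0) then 1
  else if x = (0, 0, 1) then a
  else if x = (0, 1, 0) then b
  else if x = (0, 1, 1) then 1 / c
  else if x = (1, 0, 0) then c
  else if x = (1, 0, 1) then 1 / b
  else if x = (1, 1, 0) then 1 / a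
  else 1

/-- The three-qubit state `ρ_abc` of Acín et al. (Eq. (39)):  diagonal entries
`(1, a, b, 1/c, c, 1/b, 1/a, 1)/n`, corner entries `(|000⟩,|111⟩)` and `(|111⟩,|000⟩)`
equal to `1/n`, and all other entries zero, with `n = 2 + a + b + c + 1/a + 1/b + 1/c`. -/
def rhoAbc (a b c : ℝ) : Matrix (Fin 2 × Fin 2 × Fin 2) (Fin 2 × Fin 2 × Fin 2) ℂ :=
  Matrix.of fun x y =>
    if x = y then (rhoAbcDiag a b c x : ℂ) / ((2 + a + b + c + 1/a + 1/b + 1/c : ℝ) : ℂ)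
    else if (x = (0, 0, 0) ∧ y = (1, 1, 1)) ∨ (x = (1, 1, 1) ∧ y = (0, 0, 0)) then
      1 / ((2 + a + b + c + 1/a + 1/b + 1/c : ℝ) : ℂ)
    else 0

/-!
If `ρ = ∑ₖ pₖ Aₖ ⊗ Bₖ ⊗ Cₖ`, every factor is positive semidefinite, so
`|(Aₖ)ᵢⱼ|² ≤ (Aₖ)ᵢᵢ (Aₖ)ⱼⱼ`, and likewise for `Bₖ` and `Cₖ`. Three applications of the
Cauchy–Schwarz inequality turn this into the bound
`|ρ_{x₁x₂x₃, y₁y₂y₃}|⁴ ≤ ρ_{x₁x₂x₃} ρ_{x₁y₂y₃} ρ_{y₁x₂y₃} ρ_{y₁y₂x₃}` on diagonal entries.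
For `ρ_abc` the corner entries are `1/n`; the bound at `x = 000, y = 111` gives
`1/n⁴ ≤ 1/(abc n⁴)` and at `x = 111, y = 000` it gives `1/n⁴ ≤ abc/n⁴`, forcing `abc = 1`.
-/

theorem Matrix.PosSemidef.norm_apply_sq_le {𝕜 n : Type*} [RCLike 𝕜]
    {A : Matrix n n 𝕜} (hA : A.PosSemidef) (i j : n) :
    ‖A i j‖ ^ 2 ≤ RCLike.re (A i i) * RCLike.re (A j j) := by
  have hdet := (hA.submatrix ![i, j]).det_nonneg
  rw [det_fin_two] at hdet
  simp only [submatrix_apply, Matrix.cons_val_zero, Matrix.cons_val_one] at hdet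
  rw [← hA.1.apply j i, ← hA.1.coe_re_apply_self i, ← hA.1.coe_re_apply_self j,
    RCLike.star_def, RCLike.mul_conj] at hdet
  exact sub_nonneg.mp (by exact_mod_cast hdet)

theorem Matrix.PosSemidef.re_apply_self_nonneg {𝕜 n : Type*} [RCLike 𝕜]
    {A : Matrix n n 𝕜} (hA : A.PosSemidef) (i : n) : 0 ≤ RCLike.re (A i i) :=
  (RCLike.nonneg_iff.mp hA.diag_nonneg).1

theorem mul_sq_le_mul_mul_mul {R : Type*} [CommRing R] [LinearOrder R] [IsStrictOrderedRing R]
    (s : R) {t f g : R} (h : t ^ 2 ≤ f * g) : (s * t) ^ 2 ≤ (s * f) * (s * g) :=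
  calc (s * t) ^ 2 = s ^ 2 * t ^ 2 := mul_pow s t 2
    _ ≤ s ^ 2 * (f * g) := mul_le_mul_of_nonneg_left h (sq_nonneg s)
    _ = (s * f) * (s * g) := by ring

theorem Finset.sum_mul_mul_mul_pow_four_le {ι : Type*} (s : Finset ι)
    {p u v w a₀ a₁ b₀ b₁ c₀ c₁ : ι → ℝ} (hp : ∀ i ∈ s, 0 ≤ p i)
    (ha : ∀ i ∈ s, 0 ≤ a₀ i ∧ 0 ≤ a₁ i) (hb : ∀ i ∈ s, 0 ≤ b₀ i ∧ 0 ≤ b₁ i)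
    (hc : ∀ i ∈ s, 0 ≤ c₀ i ∧ 0 ≤ c₁ i) (hu : ∀ i ∈ s, u i ^ 2 ≤ a₀ i * a₁ i)
    (hv : ∀ i ∈ s, 0 ≤ v i ∧ v i ^ 2 ≤ b₀ i * b₁ i)
    (hw : ∀ i ∈ s, 0 ≤ w i ∧ w i ^ 2 ≤ c₀ i * c₁ i) :
    (∑ i ∈ s, p i * (u i * (v i * w i))) ^ 4 ≤
      (∑ i ∈ s, p i * (a₀ i * (b₀ i * c₀ i))) * (∑ i ∈ s, p i * (a₀ i * (b₁ i * c₁ i))) *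
        ((∑ i ∈ s, p i * (a₁ i * (b₀ i * c₁ i))) * ∑ i ∈ s, p i * (a₁ i * (b₁ i * c₀ i))) := by
  have hvw : ∀ i ∈ s, (v i * w i) ^ 2 ≤ b₀ i * b₁ i * (c₀ i * c₁ i) := fun i hi => by
    rw [mul_pow]
    exact mul_le_mul (hv i hi).2 (hw i hi).2 (sq_nonneg _) (mul_nonneg (hb i hi).1 (hb i hi).2)
  have hweight {f : ι → ℝ} (hf : ∀ i ∈ s, 0 ≤ f i) : ∀ i ∈ s, 0 ≤ p i * f i :=
    fun i hi => mul_nonneg (hp i hi) (hf i hi)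
  have hprod {x y z : ι → ℝ} (hx : ∀ i ∈ s, 0 ≤ x i) (hy : ∀ i ∈ s, 0 ≤ y i)
      (hz : ∀ i ∈ s, 0 ≤ z i) : ∀ i ∈ s, 0 ≤ x i * (y i * z i) :=
    fun i hi => mul_nonneg (hx i hi) (mul_nonneg (hy i hi) (hz i hi))
  have hS := s.sum_sq_le_sum_mul_sum_of_sq_le_mul (r := fun i => p i * (u i * (v i * w i)))
    (hweight fun i hi => mul_nonneg (ha i hi).1 (mul_nonneg (hv i hi).1 (hw i hi).1))
    (hweight fun i hi => mul_nonneg (ha i hi).2 (mul_nonneg (hv i hi).1 (hw i hi).1))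
    fun i hi => mul_sq_le_mul_mul_mul (p i) <| by
      simpa only [mul_comm (v i * w i)] using mul_sq_le_mul_mul_mul (v i * w i) (hu i hi)
  have hU := s.sum_sq_le_sum_mul_sum_of_sq_le_mul
    (hweight (hprod (fun i hi => (ha i hi).1) (fun i hi => (hb i hi).1) fun i hi => (hc i hi).1))
    (hweight (hprod (fun i hi => (ha i hi).1) (fun i hi => (hb i hi).2) fun i hi => (hc i hi).2))
    fun i hi => mul_sq_le_mul_mul_mul (p i) <|
      mul_sq_le_mul_mul_mul (a₀ i) ((hvw i hi).trans_eq (by ring))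
  have hV := s.sum_sq_le_sum_mul_sum_of_sq_le_mul
    (hweight (hprod (fun i hi => (ha i hi).2) (fun i hi => (hb i hi).1) fun i hi => (hc i hi).2))
    (hweight (hprod (fun i hi => (ha i hi).2) (fun i hi => (hb i hi).2) fun i hi => (hc i hi).1))
    fun i hi => mul_sq_le_mul_mul_mul (p i) <|
      mul_sq_le_mul_mul_mul (a₁ i) ((hvw i hi).trans_eq (by ring))
  calc _ = ((∑ i ∈ s, p i * (u i * (v i * w i))) ^ 2) ^ 2 := by ring
    _ ≤ (_ * _) ^ 2 := pow_le_pow_left₀ (sq_nonneg _) hS 2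
    _ = _ ^ 2 * _ ^ 2 := mul_pow _ _ 2
    _ ≤ _ := mul_le_mul hU hV (sq_nonneg _) ((sq_nonneg _).trans hU)

theorem Matrix.sum_smul_kronecker_kronecker_apply {ι R l l' m m' n n' : Type*} [CommSemiring R]
    (s : Finset ι) (p : ι → R) (A : ι → Matrix l l' R) (B : ι → Matrix m m' R)
    (C : ι → Matrix n n' R) (x : l × m × n) (y : l' × m' × n') :
    (∑ k ∈ s, p k • (A k ⊗ₖ (B k ⊗ₖ C k))) x y =
      ∑ k ∈ s, p k * (A k x.1 y.1 * (B k x.2.1 y.2.1 * C k x.2.2 y.2.2)) := by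
  simp [Matrix.sum_apply]

theorem FullySeparable.norm_apply_pow_four_le {dA dB dC : ℕ}
    {ρ : Matrix (Fin dA × Fin dB × Fin dC) (Fin dA × Fin dB × Fin dC) ℂ} (hρ : FullySeparable ρ)
    (x₁ y₁ : Fin dA) (x₂ y₂ : Fin dB) (x₃ y₃ : Fin dC) :
    ‖ρ (x₁, x₂, x₃) (y₁, y₂, y₃)‖ ^ 4 ≤
      (ρ (x₁, x₂, x₃) (x₁, x₂, x₃)).re * (ρ (x₁, y₂, y₃) (x₁, y₂, y₃)).re *
        ((ρ (y₁, x₂, y₃) (y₁, x₂, y₃)).re * (ρ (y₁, y₂, x₃) (y₁, y₂, x₃)).re) := by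
  obtain ⟨N, p, A, B, C, hp, -, hA, hB, hC, rfl⟩ := hρ
  have diag (z : Fin dA × Fin dB × Fin dC) :
      ((∑ k, (p k : ℂ) • (A k ⊗ₖ (B k ⊗ₖ C k))) z z).re = ∑ k, p k *
        (RCLike.re (A k z.1 z.1) * (RCLike.re (B k z.2.1 z.2.1) * RCLike.re (C k z.2.2 z.2.2))) := by
    rw [Matrix.sum_smul_kronecker_kronecker_apply, Complex.re_sum]
    refine Finset.sum_congr rfl fun k _ => ?_
    rw [← (hA k).1.1.coe_re_apply_self, ← (hB k).1.1.coe_re_apply_self,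
      ← (hC k).1.1.coe_re_apply_self]
    norm_cast
    rw [Complex.re_ofReal_mul]
    exact congrArg _ (Complex.ofReal_re _)
  have corner : ‖(∑ k, (p k : ℂ) • (A k ⊗ₖ (B k ⊗ₖ C k))) (x₁, x₂, x₃) (y₁, y₂, y₃)‖ ≤
      ∑ k, p k * (‖A k x₁ y₁‖ * (‖B k x₂ y₂‖ * ‖C k x₃ y₃‖)) := by
    rw [Matrix.sum_smul_kronecker_kronecker_apply]
    refine (norm_sum_le _ _).trans_eq (Finset.sum_congr rfl fun k _ => ?_)
    simp [abs_of_nonneg (hp k)]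
  rw [diag, diag, diag, diag]
  refine (pow_le_pow_left₀ (norm_nonneg _) corner 4).trans
    (Finset.univ.sum_mul_mul_mul_pow_four_le (fun k _ => hp k)
      (fun k _ => ⟨(hA k).1.re_apply_self_nonneg _, (hA k).1.re_apply_self_nonneg _⟩)
      (fun k _ => ⟨(hB k).1.re_apply_self_nonneg _, (hB k).1.re_apply_self_nonneg _⟩)
      (fun k _ => ⟨(hC k).1.re_apply_self_nonneg _, (hC k).1.re_apply_self_nonneg _⟩)
      (fun k _ => (hA k).1.norm_apply_sq_le _ _)
      (fun k _ => ⟨norm_nonneg _, (hB k).1.norm_apply_sq_le _ _⟩)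
      (fun k _ => ⟨norm_nonneg _, (hC k).1.norm_apply_sq_le _ _⟩))

theorem rhoAbc_apply_self_re (a b c : ℝ) (x : Fin 2 × Fin 2 × Fin 2) :
    (rhoAbc a b c x x).re = rhoAbcDiag a b c x / (2 + a + b + c + 1/a + 1/b + 1/c) := by
  simp only [rhoAbc, of_apply]
  norm_cast

theorem norm_rhoAbc_apply_corner {a b c : ℝ} (ha : 0 < a) (hb : 0 < b) (hc : 0 < c)
    {x y : Fin 2 × Fin 2 × Fin 2}
    (hxy : x = (0, 0, 0) ∧ y = (1, 1, 1) ∨ x = (1, 1, 1) ∧ y = (0, 0, 0)) :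
    ‖rhoAbc a b c x y‖ = 1 / (2 + a + b + c + 1/a + 1/b + 1/c) := by
  have hne : x ≠ y := by rcases hxy with ⟨rfl, rfl⟩ | ⟨rfl, rfl⟩ <;> decide
  simp only [rhoAbc, of_apply, if_neg hne, if_pos hxy]
  rw [norm_div, norm_one, Complex.norm_real, Real.norm_of_nonneg (by positivity)]

/-- **The bound entangled states `ρ_abc` are not fully separable for `abc ≠ 1`.** -/
theorem rhoAbc_not_fully_separable (a b c : ℝ) (ha : 0 < a) (hb : 0 < b) (hc : 0 < c)
    (habc : a * b * c ≠ 1) : ¬ FullySeparable (rhoAbc a b c) := by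
  intro hsep
  have even := hsep.norm_apply_pow_four_le 0 1 0 1 0 1
  have odd := hsep.norm_apply_pow_four_le 1 0 1 0 1 0
  rw [norm_rhoAbc_apply_corner ha hb hc (.inl ⟨rfl, rfl⟩)] at even
  rw [norm_rhoAbc_apply_corner ha hb hc (.inr ⟨rfl, rfl⟩)] at odd
  simp only [rhoAbc_apply_self_re, rhoAbcDiag, Prod.mk.injEq, Fin.isValue, one_ne_zero,
    zero_ne_one, and_self, and_false, and_true, if_true, if_false] at even odd
  have hn : 0 < 2 + a + b + c + 1/a + 1/b + 1/c := by positivity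
  field_simp at even odd
  exact habc (by linarith)
end
end

section
/- Let ρ be a fully separable three-qubit density matrix on ℂ²⊗ℂ²⊗ℂ², with entries indexed by the basis |000⟩,…,|111⟩. Then |ρ(000,111)|⁶ ≤ ρ(001,001)·ρ(010,010)·ρ(011,011)·ρ(100,100)·ρ(101,101)·ρ(110,110), where the diagonal entries on the right are nonnegative reals. -/
open Matrix
open scoped Kronecker ComplexOrder

noncomputable section

/-! The six diagonal entries form the complementary pairs (001, 110), (010, 101), (100, 011),
each obtained from (000, 111) by swapping some coordinates. For a product state `A ⊗ B ⊗ C` the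
product of the two diagonal entries of such a pair is `∏ (M₀₀ M₁₁)` over the factors, which
dominates `|ρ(000,111)|² = ∏ |M₀₁|²` since the 2 × 2 minors of a positive semidefinite matrix are
nonnegative. Cauchy–Schwarz carries the bound `|ρ(x,y)|² ≤ ρ(u,u) ρ(v,v)` through convex
combinations, and multiplying the three resulting bounds gives the sixth power. -/

namespace Matrix.PosSemidef

variable {n : Type*} {M : Matrix n n ℂ}

lemma re_apply_self_nonneg_s17 (hM : M.PosSemidef) (i : n) : 0 ≤ (M i i).re :=
  (Complex.nonneg_iff.mp hM.diag_nonneg).1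

lemma norm_apply_sq_le_s17 (hM : M.PosSemidef) (i j : n) :
    ‖M i j‖ ^ 2 ≤ (M i i).re * (M j j).re := by
  have hdet := (hM.submatrix ![i, j]).det_nonneg
  rw [det_fin_two] at hdet
  simp only [submatrix_apply, cons_val_zero, cons_val_one] at hdet
  rw [← hM.1.apply j i, ← hM.1.coe_re_apply_self i, ← hM.1.coe_re_apply_self j,
    Complex.star_def, Complex.mul_conj, Complex.normSq_eq_norm_sq] at hdet
  simpa [sub_nonneg, ← Complex.ofReal_pow] using (Complex.nonneg_iff.mp hdet).1

end Matrix.PosSemidef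

lemma Sym2.mul_eq_mul_of_eq {α M : Type*} [CommMagma M] (f : α → M) {a b c d : α}
    (h : s(a, b) = s(c, d)) : f a * f b = f c * f d := by
  rcases Sym2.eq_iff.mp h with ⟨rfl, rfl⟩ | ⟨rfl, rfl⟩
  · rfl
  · exact mul_comm _ _

namespace Matrix

variable {α β γ : Type*}

lemma re_kronecker_kronecker_apply_self {A : Matrix α α ℂ} {B : Matrix β β ℂ}
    {C : Matrix γ γ ℂ} (hA : A.IsHermitian) (hB : B.IsHermitian) (hC : C.IsHermitian)
    (z : α × β × γ) :
    ((A ⊗ₖ (B ⊗ₖ C)) z z).re = (A z.1 z.1).re * ((B z.2.1 z.2.1).re * (C z.2.2 z.2.2).re) := by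
  rw [kroneckerMap_apply, kroneckerMap_apply, ← hA.coe_re_apply_self, ← hB.coe_re_apply_self,
    ← hC.coe_re_apply_self]
  norm_cast

theorem norm_kronecker_kronecker_apply_sq_le {A : Matrix α α ℂ} {B : Matrix β β ℂ}
    {C : Matrix γ γ ℂ} (hA : A.PosSemidef) (hB : B.PosSemidef) (hC : C.PosSemidef)
    {x y u v : α × β × γ} (h₁ : s(x.1, y.1) = s(u.1, v.1))
    (h₂ : s(x.2.1, y.2.1) = s(u.2.1, v.2.1)) (h₃ : s(x.2.2, y.2.2) = s(u.2.2, v.2.2)) :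
    ‖(A ⊗ₖ (B ⊗ₖ C)) x y‖ ^ 2 ≤
      ((A ⊗ₖ (B ⊗ₖ C)) u u).re * ((A ⊗ₖ (B ⊗ₖ C)) v v).re := by
  rw [re_kronecker_kronecker_apply_self hA.1 hB.1 hC.1,
    re_kronecker_kronecker_apply_self hA.1 hB.1 hC.1, kroneckerMap_apply, kroneckerMap_apply]
  calc ‖A x.1 y.1 * (B x.2.1 y.2.1 * C x.2.2 y.2.2)‖ ^ 2
      = ‖A x.1 y.1‖ ^ 2 * (‖B x.2.1 y.2.1‖ ^ 2 * ‖C x.2.2 y.2.2‖ ^ 2) := by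
        simp only [norm_mul, mul_pow]
    _ ≤ ((A x.1 x.1).re * (A y.1 y.1).re) *
          (((B x.2.1 x.2.1).re * (B y.2.1 y.2.1).re) *
            ((C x.2.2 x.2.2).re * (C y.2.2 y.2.2).re)) := by
        have hA' := hA.norm_apply_sq_le_s17 x.1 y.1
        have hB' := hB.norm_apply_sq_le_s17 x.2.1 y.2.1
        have hC' := hC.norm_apply_sq_le_s17 x.2.2 y.2.2
        gcongr ?_ * (?_ * ?_)
        exacts [(sq_nonneg _).trans hA', (sq_nonneg _).trans hB']
    _ = ((A u.1 u.1).re * (A v.1 v.1).re) *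
          (((B u.2.1 u.2.1).re * (B v.2.1 v.2.1).re) *
            ((C u.2.2 u.2.2).re * (C v.2.2 v.2.2).re)) := by
        rw [Sym2.mul_eq_mul_of_eq (fun i => (A i i).re) h₁,
          Sym2.mul_eq_mul_of_eq (fun i => (B i i).re) h₂,
          Sym2.mul_eq_mul_of_eq (fun i => (C i i).re) h₃]
    _ = _ := by ring

theorem norm_sum_smul_apply_sq_le {ι n : Type*} [Fintype ι] {p : ι → ℝ} (hp : ∀ k, 0 ≤ p k)
    {σ : ι → Matrix n n ℂ} (hσ : ∀ k, (σ k).PosSemidef) {x y u v : n}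
    (h : ∀ k, ‖σ k x y‖ ^ 2 ≤ (σ k u u).re * (σ k v v).re) :
    ‖(∑ k, (p k : ℂ) • σ k) x y‖ ^ 2 ≤
      ((∑ k, (p k : ℂ) • σ k) u u).re * ((∑ k, (p k : ℂ) • σ k) v v).re := by
  simp only [sum_apply, smul_apply, smul_eq_mul, Complex.re_sum, Complex.re_ofReal_mul]
  have hnorm : ‖∑ k, (p k : ℂ) * σ k x y‖ ≤ ∑ k, p k * ‖σ k x y‖ :=
    (norm_sum_le _ _).trans_eq <| by simp [abs_of_nonneg (hp _)]
  calc ‖∑ k, (p k : ℂ) * σ k x y‖ ^ 2 ≤ (∑ k, p k * ‖σ k x y‖) ^ 2 := by gcongr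
    _ ≤ _ := Finset.sum_sq_le_sum_mul_sum_of_sq_le_mul _
        (fun k _ => mul_nonneg (hp k) ((hσ k).re_apply_self_nonneg_s17 u))
        (fun k _ => mul_nonneg (hp k) ((hσ k).re_apply_self_nonneg_s17 v))
        fun k _ => by
          rw [mul_mul_mul_comm, ← sq, mul_pow]
          exact mul_le_mul_of_nonneg_left (h k) (sq_nonneg _)

end Matrix

theorem FullySeparable.norm_apply_sq_le_s17 {dA dB dC : ℕ}
    {ρ : Matrix (Fin dA × Fin dB × Fin dC) (Fin dA × Fin dB × Fin dC) ℂ} (hρ : FullySeparable ρ)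
    {x y u v : Fin dA × Fin dB × Fin dC} (h₁ : s(x.1, y.1) = s(u.1, v.1))
    (h₂ : s(x.2.1, y.2.1) = s(u.2.1, v.2.1)) (h₃ : s(x.2.2, y.2.2) = s(u.2.2, v.2.2)) :
    ‖ρ x y‖ ^ 2 ≤ (ρ u u).re * (ρ v v).re := by
  obtain ⟨n, p, A, B, C, hp, -, hA, hB, hC, rfl⟩ := hρ
  exact norm_sum_smul_apply_sq_le hp (fun k => (hA k).1.kronecker ((hB k).1.kronecker (hC k).1))
    fun k => norm_kronecker_kronecker_apply_sq_le (hA k).1 (hB k).1 (hC k).1 h₁ h₂ h₃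

theorem fully_separable_matrix_entry_criterion_general
    (ρ : Matrix (Fin 2 × Fin 2 × Fin 2) (Fin 2 × Fin 2 × Fin 2) ℂ)
    (hsep : FullySeparable ρ) :
    ‖ρ (0, 0, 0) (1, 1, 1)‖ ^ 6 ≤
      (ρ (0, 0, 1) (0, 0, 1)).re * (ρ (0, 1, 0) (0, 1, 0)).re *
      (ρ (0, 1, 1) (0, 1, 1)).re * (ρ (1, 0, 0) (1, 0, 0)).re *
      (ρ (1, 0, 1) (1, 0, 1)).re * (ρ (1, 1, 0) (1, 1, 0)).re := by
  set e := ‖ρ (0, 0, 0) (1, 1, 1)‖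
  have h₁ : e ^ 2 ≤ (ρ (0, 0, 1) (0, 0, 1)).re * (ρ (1, 1, 0) (1, 1, 0)).re :=
    hsep.norm_apply_sq_le_s17 rfl rfl Sym2.eq_swap
  have h₂ : e ^ 2 ≤ (ρ (0, 1, 0) (0, 1, 0)).re * (ρ (1, 0, 1) (1, 0, 1)).re :=
    hsep.norm_apply_sq_le_s17 rfl Sym2.eq_swap rfl
  have h₃ : e ^ 2 ≤ (ρ (1, 0, 0) (1, 0, 0)).re * (ρ (0, 1, 1) (0, 1, 1)).re :=
    hsep.norm_apply_sq_le_s17 Sym2.eq_swap rfl rfl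
  have h₀ : 0 ≤ e ^ 2 := sq_nonneg e
  calc e ^ 6 = e ^ 2 * e ^ 2 * e ^ 2 := by ring
    _ ≤ _ * _ * _ :=
      mul_le_mul (mul_le_mul h₁ h₂ h₀ (h₀.trans h₁)) h₃ h₀
        (mul_nonneg (h₀.trans h₁) (h₀.trans h₂))
    _ = _ := by ring

/-- **The matrix-entry criterion Eq. (58) of Gühne–Seevinck type.**
For every fully separable three-qubit state:
`|ρ_{000,111}|⁶ ≤ ρ_{001,001} ρ_{010,010} ρ_{011,011} ρ_{100,100} ρ_{101,101} ρ_{110,110}`. -/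
theorem fully_separable_matrix_entry_criterion
    (ρ : Matrix (Fin 2 × Fin 2 × Fin 2) (Fin 2 × Fin 2 × Fin 2) ℂ)
    (hρ : IsDensityMatrix ρ) (hsep : FullySeparable ρ) :
    ‖ρ (0, 0, 0) (1, 1, 1)‖ ^ 6 ≤
      (ρ (0, 0, 1) (0, 0, 1)).re * (ρ (0, 1, 0) (0, 1, 0)).re *
      (ρ (0, 1, 1) (0, 1, 1)).re * (ρ (1, 0, 0) (1, 0, 0)).re *
      (ρ (1, 0, 1) (1, 0, 1)).re * (ρ (1, 1, 0) (1, 1, 0)).re :=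
  fully_separable_matrix_entry_criterion_general ρ hsep
end
end

section
/- Let ρ be a biseparable tripartite density matrix on ℂ^{d_1}⊗ℂ^{d_2}⊗ℂ^{d_3}, i.e., a finite convex combination of density matrices each of which is separable with respect to one of the three bipartitions {1}|{2,3}, {2}|{1,3}, {3}|{1,2}. For each k let X_k, Y_k be d_k×d_k complex matrices. For a subset M ⊆ {1,2,3}, define O_k^M = X_kX_k† if k ∈ M and O_k^M = Y_k†Y_k if k ∉ M, and let T_M = Re Tr((O_1^M ⊗ O_2^M ⊗ O_3^M)ρ) (a nonnegative real). Then |Tr((X_1Y_1 ⊗ X_2Y_2 ⊗ X_3Y_3)ρ)| ≤ √(T_{{1}}·T_{{2,3}}) + √(T_{{2}}·T_{{1,3}}) + √(T_{{3}}·T_{{1,2}}). This inequality holds for all biseparable states and can only be violated by genuinely multipartite entangled states. -/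
/-!
For a state that is a product `σ ⊗ τ` across a cut `M | M̄`, the expectation of
`X₁Y₁ ⊗ X₂Y₂ ⊗ X₃Y₃` factorizes, and the Cauchy–Schwarz inequality
`|Tr(A B σ)|² ≤ Tr(A A† σ) Tr(B† B σ)` (for the semi-inner product `⟪x, y⟫ = Tr(y σ x†)`),
applied on each side of the cut, bounds it by the single term `√(T_M T_M̄)`.
The left side `|Tr(W ρ)|` is convex in `ρ`, while each geometric mean `√(T_M T_M̄)` of two
linear functionals that are nonnegative on positive semidefinite matrices is concave; so the
inequality survives convex combinations, first of product states into states separable across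
a cut, then of those into biseparable states.
-/
open Matrix
open scoped Kronecker ComplexOrder

noncomputable section

/-- Separability of a tripartite state with respect to the bipartition `{1}|{2,3}`. -/
def SepCut1 {d₁ d₂ d₃ : ℕ}
    (ρ : Matrix (Fin d₁ × Fin d₂ × Fin d₃) (Fin d₁ × Fin d₂ × Fin d₃) ℂ) : Prop :=
  ∃ (n : ℕ) (p : Fin n → ℝ) (σ : Fin n → Matrix (Fin d₁) (Fin d₁) ℂ)
    (τ : Fin n → Matrix (Fin d₂ × Fin d₃) (Fin d₂ × Fin d₃) ℂ),
    (∀ k, 0 ≤ p k) ∧ (∑ k, p k = 1) ∧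
    (∀ k, IsDensityMatrix (σ k)) ∧ (∀ k, IsDensityMatrix (τ k)) ∧
    ρ = ∑ k, (p k : ℂ) • (σ k ⊗ₖ τ k)

/-- Separability of a tripartite state with respect to the bipartition `{2}|{1,3}`. -/
def SepCut2 {d₁ d₂ d₃ : ℕ}
    (ρ : Matrix (Fin d₁ × Fin d₂ × Fin d₃) (Fin d₁ × Fin d₂ × Fin d₃) ℂ) : Prop :=
  ∃ (n : ℕ) (p : Fin n → ℝ) (σ : Fin n → Matrix (Fin d₂) (Fin d₂) ℂ)
    (τ : Fin n → Matrix (Fin d₁ × Fin d₃) (Fin d₁ × Fin d₃) ℂ),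
    (∀ k, 0 ≤ p k) ∧ (∑ k, p k = 1) ∧
    (∀ k, IsDensityMatrix (σ k)) ∧ (∀ k, IsDensityMatrix (τ k)) ∧
    ρ = ∑ k, (p k : ℂ) •
      Matrix.of (fun x y : Fin d₁ × Fin d₂ × Fin d₃ =>
        σ k x.2.1 y.2.1 * τ k (x.1, x.2.2) (y.1, y.2.2))

/-- Separability of a tripartite state with respect to the bipartition `{3}|{1,2}`. -/
def SepCut3 {d₁ d₂ d₃ : ℕ}
    (ρ : Matrix (Fin d₁ × Fin d₂ × Fin d₃) (Fin d₁ × Fin d₂ × Fin d₃) ℂ) : Prop :=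
  ∃ (n : ℕ) (p : Fin n → ℝ) (σ : Fin n → Matrix (Fin d₃) (Fin d₃) ℂ)
    (τ : Fin n → Matrix (Fin d₁ × Fin d₂) (Fin d₁ × Fin d₂) ℂ),
    (∀ k, 0 ≤ p k) ∧ (∑ k, p k = 1) ∧
    (∀ k, IsDensityMatrix (σ k)) ∧ (∀ k, IsDensityMatrix (τ k)) ∧
    ρ = ∑ k, (p k : ℂ) •
      Matrix.of (fun x y : Fin d₁ × Fin d₂ × Fin d₃ =>
        σ k x.2.2 y.2.2 * τ k (x.1, x.2.1) (y.1, y.2.1))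

/-- A tripartite state is biseparable if it is a finite convex combination of density
matrices each of which is separable with respect to one of the three bipartitions. -/
def Biseparable {d₁ d₂ d₃ : ℕ}
    (ρ : Matrix (Fin d₁ × Fin d₂ × Fin d₃) (Fin d₁ × Fin d₂ × Fin d₃) ℂ) : Prop :=
  ∃ (n : ℕ) (p : Fin n → ℝ)
    (σ : Fin n → Matrix (Fin d₁ × Fin d₂ × Fin d₃) (Fin d₁ × Fin d₂ × Fin d₃) ℂ),
    (∀ k, 0 ≤ p k) ∧ (∑ k, p k = 1) ∧ (∀ k, IsDensityMatrix (σ k)) ∧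
    (∀ k, SepCut1 (σ k) ∨ SepCut2 (σ k) ∨ SepCut3 (σ k)) ∧
    ρ = ∑ k, (p k : ℂ) • σ k

section TraceInequalities

open scoped MatrixOrder

variable {ι : Type*} [Fintype ι]

lemma Matrix.PosSemidef.trace_mul_nonneg_s19 [DecidableEq ι] {P ρ : Matrix ι ι ℂ}
    (hP : P.PosSemidef) (hρ : ρ.PosSemidef) : 0 ≤ (P * ρ).trace := by
  obtain ⟨B, rfl⟩ := CStarAlgebra.nonneg_iff_eq_star_mul_self.mp hP.nonneg
  rw [star_eq_conjTranspose, trace_mul_cycle, trace_mul_comm, ← Matrix.mul_assoc]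
  exact (hρ.mul_mul_conjTranspose_same B).trace_nonneg

lemma Matrix.PosSemidef.re_trace_mul_nonneg [DecidableEq ι] {P ρ : Matrix ι ι ℂ}
    (hP : P.PosSemidef) (hρ : ρ.PosSemidef) : 0 ≤ (P * ρ).trace.re :=
  (Complex.nonneg_iff.mp (hP.trace_mul_nonneg_s19 hρ)).1

lemma Matrix.PosSemidef.norm_trace_mul_mul_le {ρ : Matrix ι ι ℂ} (hρ : ρ.PosSemidef)
    (A B : Matrix ι ι ℂ) :
    ‖(A * B * ρ).trace‖ ≤ √((A * Aᴴ * ρ).trace.re * (Bᴴ * B * ρ).trace.re) := by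
  let := ρ.toMatrixSeminormedAddCommGroup hρ
  let := ρ.toMatrixInnerProductSpace hρ
  have inner_eq : ∀ x y : Matrix ι ι ℂ, inner ℂ x y = (y * ρ * xᴴ).trace := fun _ _ => rfl
  have h := inner_mul_inner_self_le (𝕜 := ℂ) Aᴴ B
  rw [norm_inner_symm B, inner_eq, inner_eq, inner_eq, conjTranspose_conjTranspose,
    trace_mul_cycle B, trace_mul_cycle Aᴴ, trace_mul_cycle B] at h
  rw [← Real.sqrt_mul_self (norm_nonneg _)]
  exact Real.sqrt_le_sqrt h

end TraceInequalities

lemma trace_submatrix_mul_submatrix {ι κ : Type*} [Fintype ι] [Fintype κ] (P ρ : Matrix ι ι ℂ)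
    (e : κ ≃ ι) : (P.submatrix e e * ρ.submatrix e e).trace = (P * ρ).trace := by
  rw [submatrix_mul_equiv]
  exact Fintype.sum_equiv e _ _ fun _ => rfl

lemma sum_mul_sqrt_mul_le {ν : Type*} (s : Finset ν) {p u v : ν → ℝ} (hp : ∀ k, 0 ≤ p k)
    (hu : ∀ k, 0 ≤ u k) (hv : ∀ k, 0 ≤ v k) :
    ∑ k ∈ s, p k * √(u k * v k) ≤ √((∑ k ∈ s, p k * u k) * ∑ k ∈ s, p k * v k) := by
  have hpu k : 0 ≤ p k * u k := mul_nonneg (hp k) (hu k)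
  have hpv k : 0 ≤ p k * v k := mul_nonneg (hp k) (hv k)
  have split k : p k * √(u k * v k) = √(p k * u k) * √(p k * v k) := by
    rw [← Real.sqrt_mul (hpu k), mul_mul_mul_comm, Real.sqrt_mul (mul_self_nonneg _),
      Real.sqrt_mul_self (hp k)]
  simp_rw [split, Real.sqrt_mul (Finset.sum_nonneg fun k _ => hpu k)]
  exact Real.sum_sqrt_mul_sqrt_le s hpu hpv

section Mixtures

variable {ι κ ν : Type*} [Fintype ι] [Fintype κ] [Fintype ν]

def sumSqrtTraceMul (A B : κ → Matrix ι ι ℂ) (ρ : Matrix ι ι ℂ) : ℝ :=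
  ∑ i, √((A i * ρ).trace.re * (B i * ρ).trace.re)

lemma sqrt_le_sumSqrtTraceMul (A B : κ → Matrix ι ι ℂ) (ρ : Matrix ι ι ℂ) (i : κ) :
    √((A i * ρ).trace.re * (B i * ρ).trace.re) ≤ sumSqrtTraceMul A B ρ :=
  Finset.single_le_sum (f := fun j => √((A j * ρ).trace.re * (B j * ρ).trace.re))
    (fun _ _ => Real.sqrt_nonneg _) (Finset.mem_univ i)

lemma trace_mul_sum_smul (P : Matrix ι ι ℂ) (p : ν → ℝ) (σ : ν → Matrix ι ι ℂ) :
    (P * ∑ k, (p k : ℂ) • σ k).trace = ∑ k, (p k : ℂ) * (P * σ k).trace := by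
  simp [Matrix.mul_sum, Matrix.trace_sum]

lemma norm_trace_mul_sum_smul_le (P : Matrix ι ι ℂ) {p : ν → ℝ} (hp : ∀ k, 0 ≤ p k)
    (σ : ν → Matrix ι ι ℂ) :
    ‖(P * ∑ k, (p k : ℂ) • σ k).trace‖ ≤ ∑ k, p k * ‖(P * σ k).trace‖ := by
  rw [trace_mul_sum_smul]
  refine (norm_sum_le _ _).trans_eq (Finset.sum_congr rfl fun k _ => ?_)
  rw [norm_mul, Complex.norm_real, Real.norm_of_nonneg (hp k)]

lemma re_trace_mul_sum_smul (P : Matrix ι ι ℂ) (p : ν → ℝ) (σ : ν → Matrix ι ι ℂ) :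
    (P * ∑ k, (p k : ℂ) • σ k).trace.re = ∑ k, p k * (P * σ k).trace.re := by
  simp only [trace_mul_sum_smul, Complex.re_sum, Complex.re_ofReal_mul]

variable [DecidableEq ι] {A B : κ → Matrix ι ι ℂ} {p : ν → ℝ} {σ : ν → Matrix ι ι ℂ}

lemma sum_mul_sumSqrtTraceMul_le (hA : ∀ i, (A i).PosSemidef) (hB : ∀ i, (B i).PosSemidef)
    (hp : ∀ k, 0 ≤ p k) (hσ : ∀ k, (σ k).PosSemidef) :
    ∑ k, p k * sumSqrtTraceMul A B (σ k) ≤ sumSqrtTraceMul A B (∑ k, (p k : ℂ) • σ k) := by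
  calc ∑ k, p k * sumSqrtTraceMul A B (σ k)
      = ∑ i, ∑ k, p k * √((A i * σ k).trace.re * (B i * σ k).trace.re) := by
        simp only [sumSqrtTraceMul, Finset.mul_sum]
        exact Finset.sum_comm
    _ ≤ sumSqrtTraceMul A B (∑ k, (p k : ℂ) • σ k) := by
        simp only [sumSqrtTraceMul, re_trace_mul_sum_smul]
        exact Finset.sum_le_sum fun i _ => sum_mul_sqrt_mul_le _ hp
          (fun k => (hA i).re_trace_mul_nonneg (hσ k))
          (fun k => (hB i).re_trace_mul_nonneg (hσ k))

lemma norm_trace_mul_sum_smul_le_sumSqrtTraceMul (W : Matrix ι ι ℂ)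
    (hA : ∀ i, (A i).PosSemidef) (hB : ∀ i, (B i).PosSemidef)
    (hp : ∀ k, 0 ≤ p k) (hσ : ∀ k, (σ k).PosSemidef)
    (h : ∀ k, ‖(W * σ k).trace‖ ≤ sumSqrtTraceMul A B (σ k)) :
    ‖(W * ∑ k, (p k : ℂ) • σ k).trace‖ ≤ sumSqrtTraceMul A B (∑ k, (p k : ℂ) • σ k) :=
  calc ‖(W * ∑ k, (p k : ℂ) • σ k).trace‖ ≤ ∑ k, p k * ‖(W * σ k).trace‖ :=
        norm_trace_mul_sum_smul_le W hp σ
    _ ≤ ∑ k, p k * sumSqrtTraceMul A B (σ k) :=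
        Finset.sum_le_sum fun k _ => mul_le_mul_of_nonneg_left (h k) (hp k)
    _ ≤ _ := sum_mul_sumSqrtTraceMul_le hA hB hp hσ

end Mixtures

section Kronecker

variable {α β γ : Type*} [Fintype α] [Fintype β] [Fintype γ]

lemma trace_kronecker_mul_kronecker (P σ : Matrix α α ℂ) (Q τ : Matrix β β ℂ) :
    ((P ⊗ₖ Q) * (σ ⊗ₖ τ)).trace = (P * σ).trace * (Q * τ).trace := by
  rw [← mul_kronecker_mul, trace_kronecker]

variable [DecidableEq α]

lemma norm_trace_kronecker_mul_le (X Y : Matrix α α ℂ) (C D : Matrix β β ℂ)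
    {σ : Matrix α α ℂ} {τ : Matrix β β ℂ} (hσ : σ.PosSemidef) (hτ : τ.PosSemidef) :
    ‖(((X * Y) ⊗ₖ (C * D)) * (σ ⊗ₖ τ)).trace‖ ≤
      √((((X * Xᴴ) ⊗ₖ (Dᴴ * D)) * (σ ⊗ₖ τ)).trace.re *
        (((Yᴴ * Y) ⊗ₖ (C * Cᴴ)) * (σ ⊗ₖ τ)).trace.re) := by
  have re_mul {z : ℂ} (hz : 0 ≤ z) (w : ℂ) : (z * w).re = z.re * w.re := by
    simp [Complex.mul_re, ← (Complex.nonneg_iff.mp hz).2]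
  have hX := (posSemidef_self_mul_conjTranspose X).trace_mul_nonneg_s19 hσ
  have hY := (posSemidef_conjTranspose_mul_self Y).trace_mul_nonneg_s19 hσ
  rw [trace_kronecker_mul_kronecker, trace_kronecker_mul_kronecker, trace_kronecker_mul_kronecker,
    norm_mul, re_mul hX, re_mul hY]
  calc ‖(X * Y * σ).trace‖ * ‖(C * D * τ).trace‖
      ≤ √((X * Xᴴ * σ).trace.re * (Yᴴ * Y * σ).trace.re) *
          √((C * Cᴴ * τ).trace.re * (Dᴴ * D * τ).trace.re) :=
        mul_le_mul (hσ.norm_trace_mul_mul_le X Y) (hτ.norm_trace_mul_mul_le C D)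
          (norm_nonneg _) (Real.sqrt_nonneg _)
    _ = _ := by
        rw [← Real.sqrt_mul (mul_nonneg (Complex.nonneg_iff.mp hX).1 (Complex.nonneg_iff.mp hY).1)]
        ring_nf

lemma norm_trace_kronecker_kronecker_mul_le (X Y : Matrix α α ℂ) (P Q : Matrix β β ℂ)
    (R S : Matrix γ γ ℂ) {σ : Matrix α α ℂ} {τ : Matrix (β × γ) (β × γ) ℂ}
    (hσ : σ.PosSemidef) (hτ : τ.PosSemidef) :
    ‖(((X * Y) ⊗ₖ ((P * Q) ⊗ₖ (R * S))) * (σ ⊗ₖ τ)).trace‖ ≤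
      √((((X * Xᴴ) ⊗ₖ ((Qᴴ * Q) ⊗ₖ (Sᴴ * S))) * (σ ⊗ₖ τ)).trace.re *
        (((Yᴴ * Y) ⊗ₖ ((P * Pᴴ) ⊗ₖ (R * Rᴴ))) * (σ ⊗ₖ τ)).trace.re) := by
  simpa only [mul_kronecker_mul, conjTranspose_kronecker] using
    norm_trace_kronecker_mul_le X Y (P ⊗ₖ R) (Q ⊗ₖ S) hσ hτ

end Kronecker

section Tripartite

variable {α β γ : Type*}

def tripleSwap12 : α × β × γ ≃ β × α × γ where
  toFun x := (x.2.1, x.1, x.2.2)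
  invFun y := (y.2.1, y.1, y.2.2)

def tripleRotate : α × β × γ ≃ γ × α × β where
  toFun x := (x.2.2, x.1, x.2.1)
  invFun y := (y.2.1, y.2.2, y.1)

lemma kronecker_kronecker_submatrix_tripleSwap12 (A : Matrix α α ℂ) (B : Matrix β β ℂ)
    (C : Matrix γ γ ℂ) :
    (B ⊗ₖ (A ⊗ₖ C)).submatrix tripleSwap12 tripleSwap12 = A ⊗ₖ (B ⊗ₖ C) := by
  ext ⟨a, b, c⟩ ⟨a', b', c'⟩
  simp only [submatrix_apply, kroneckerMap_apply, tripleSwap12, Equiv.coe_fn_mk]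
  ring

lemma kronecker_kronecker_submatrix_tripleRotate (A : Matrix α α ℂ) (B : Matrix β β ℂ)
    (C : Matrix γ γ ℂ) :
    (C ⊗ₖ (A ⊗ₖ B)).submatrix tripleRotate tripleRotate = A ⊗ₖ (B ⊗ₖ C) := by
  ext ⟨a, b, c⟩ ⟨a', b', c'⟩
  simp only [submatrix_apply, kroneckerMap_apply, tripleRotate, Equiv.coe_fn_mk]
  ring

end Tripartite

def cutFactor {ι : Type*} [Fintype ι] (X Y : Matrix ι ι ℂ) (inM : Prop) [Decidable inM] :
    Matrix ι ι ℂ :=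
  if inM then X * Xᴴ else Yᴴ * Y

lemma cutFactor_posSemidef {ι : Type*} [Fintype ι] (X Y : Matrix ι ι ℂ) (inM : Prop)
    [Decidable inM] : (cutFactor X Y inM).PosSemidef := by
  unfold cutFactor
  split_ifs
  exacts [posSemidef_self_mul_conjTranspose X, posSemidef_conjTranspose_mul_self Y]

section Criterion

variable {α β γ : Type*} [Fintype α] [Fintype β] [Fintype γ]
  (X₁ Y₁ : Matrix α α ℂ) (X₂ Y₂ : Matrix β β ℂ) (X₃ Y₃ : Matrix γ γ ℂ)

/-- The paper's `O₁ᴹ ⊗ O₂ᴹ ⊗ O₃ᴹ`, so that `T_M = Re Tr(cutOp M * ρ)`; its parties `1, 2, 3`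
are `0, 1, 2` here. -/
def cutOp (M : Finset (Fin 3)) : Matrix (α × β × γ) (α × β × γ) ℂ :=
  cutFactor X₁ Y₁ (0 ∈ M) ⊗ₖ (cutFactor X₂ Y₂ (1 ∈ M) ⊗ₖ cutFactor X₃ Y₃ (2 ∈ M))

lemma cutOp_posSemidef (M : Finset (Fin 3)) : (cutOp X₁ Y₁ X₂ Y₂ X₃ Y₃ M).PosSemidef :=
  (cutFactor_posSemidef _ _ _).kronecker
    ((cutFactor_posSemidef _ _ _).kronecker (cutFactor_posSemidef _ _ _))

def SatisfiesBisepCriterion (ρ : Matrix (α × β × γ) (α × β × γ) ℂ) : Prop :=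
  ‖(((X₁ * Y₁) ⊗ₖ ((X₂ * Y₂) ⊗ₖ (X₃ * Y₃))) * ρ).trace‖ ≤
    sumSqrtTraceMul (fun k => cutOp X₁ Y₁ X₂ Y₂ X₃ Y₃ {k})
      (fun k => cutOp X₁ Y₁ X₂ Y₂ X₃ Y₃ {k}ᶜ) ρ

variable {X₁ Y₁ X₂ Y₂ X₃ Y₃}

lemma SatisfiesBisepCriterion.sum_smul [DecidableEq α] [DecidableEq β] [DecidableEq γ]
    {ν : Type*} [Fintype ν] {p : ν → ℝ} {σ : ν → Matrix (α × β × γ) (α × β × γ) ℂ}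
    (hp : ∀ k, 0 ≤ p k) (hσ : ∀ k, (σ k).PosSemidef)
    (h : ∀ k, SatisfiesBisepCriterion X₁ Y₁ X₂ Y₂ X₃ Y₃ (σ k)) :
    SatisfiesBisepCriterion X₁ Y₁ X₂ Y₂ X₃ Y₃ (∑ k, (p k : ℂ) • σ k) :=
  norm_trace_mul_sum_smul_le_sumSqrtTraceMul _ (fun _ => cutOp_posSemidef ..)
    (fun _ => cutOp_posSemidef ..) hp hσ h

lemma satisfiesBisepCriterion_kronecker [DecidableEq α] {σ : Matrix α α ℂ}
    {τ : Matrix (β × γ) (β × γ) ℂ} (hσ : σ.PosSemidef) (hτ : τ.PosSemidef) :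
    SatisfiesBisepCriterion X₁ Y₁ X₂ Y₂ X₃ Y₃ (σ ⊗ₖ τ) := by
  refine le_trans ?_ (sqrt_le_sumSqrtTraceMul _ _ _ 0)
  simp only [cutOp, cutFactor, Finset.mem_compl, Finset.mem_singleton, Fin.reduceEq,
    not_true_eq_false, not_false_eq_true, reduceIte]
  exact norm_trace_kronecker_kronecker_mul_le X₁ Y₁ X₂ Y₂ X₃ Y₃ hσ hτ

lemma satisfiesBisepCriterion_submatrix_tripleSwap12 [DecidableEq β] {σ : Matrix β β ℂ}
    {τ : Matrix (α × γ) (α × γ) ℂ} (hσ : σ.PosSemidef) (hτ : τ.PosSemidef) :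
    SatisfiesBisepCriterion X₁ Y₁ X₂ Y₂ X₃ Y₃ ((σ ⊗ₖ τ).submatrix tripleSwap12 tripleSwap12) := by
  refine le_trans ?_ (sqrt_le_sumSqrtTraceMul _ _ _ 1)
  simp only [cutOp, cutFactor, Finset.mem_compl, Finset.mem_singleton, Fin.reduceEq,
    not_true_eq_false, not_false_eq_true, reduceIte]
  rw [← kronecker_kronecker_submatrix_tripleSwap12 (X₁ * Y₁),
    ← kronecker_kronecker_submatrix_tripleSwap12 (Y₁ᴴ * Y₁),
    ← kronecker_kronecker_submatrix_tripleSwap12 (X₁ * X₁ᴴ), trace_submatrix_mul_submatrix,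
    trace_submatrix_mul_submatrix, trace_submatrix_mul_submatrix]
  exact norm_trace_kronecker_kronecker_mul_le X₂ Y₂ X₁ Y₁ X₃ Y₃ hσ hτ

lemma satisfiesBisepCriterion_submatrix_tripleRotate [DecidableEq γ] {σ : Matrix γ γ ℂ}
    {τ : Matrix (α × β) (α × β) ℂ} (hσ : σ.PosSemidef) (hτ : τ.PosSemidef) :
    SatisfiesBisepCriterion X₁ Y₁ X₂ Y₂ X₃ Y₃ ((σ ⊗ₖ τ).submatrix tripleRotate tripleRotate) := by
  refine le_trans ?_ (sqrt_le_sumSqrtTraceMul _ _ _ 2)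
  simp only [cutOp, cutFactor, Finset.mem_compl, Finset.mem_singleton, Fin.reduceEq,
    not_true_eq_false, not_false_eq_true, reduceIte]
  rw [← kronecker_kronecker_submatrix_tripleRotate (X₁ * Y₁),
    ← kronecker_kronecker_submatrix_tripleRotate (Y₁ᴴ * Y₁),
    ← kronecker_kronecker_submatrix_tripleRotate (X₁ * X₁ᴴ), trace_submatrix_mul_submatrix,
    trace_submatrix_mul_submatrix, trace_submatrix_mul_submatrix]
  exact norm_trace_kronecker_kronecker_mul_le X₃ Y₃ X₁ Y₁ X₂ Y₂ hσ hτ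

end Criterion

section Cuts

variable {d₁ d₂ d₃ : ℕ} {X₁ Y₁ : Matrix (Fin d₁) (Fin d₁) ℂ} {X₂ Y₂ : Matrix (Fin d₂) (Fin d₂) ℂ}
  {X₃ Y₃ : Matrix (Fin d₃) (Fin d₃) ℂ}
  {ρ : Matrix (Fin d₁ × Fin d₂ × Fin d₃) (Fin d₁ × Fin d₂ × Fin d₃) ℂ}

lemma SepCut1.satisfiesBisepCriterion (h : SepCut1 ρ) :
    SatisfiesBisepCriterion X₁ Y₁ X₂ Y₂ X₃ Y₃ ρ := by
  obtain ⟨n, p, σ, τ, hp, -, hσ, hτ, rfl⟩ := h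
  exact .sum_smul hp (fun k => (hσ k).1.kronecker (hτ k).1)
    fun k => satisfiesBisepCriterion_kronecker (hσ k).1 (hτ k).1

-- The `k`-th summand of `SepCut2 ρ` (resp. `SepCut3 ρ`) is definitionally
-- `(σ k ⊗ₖ τ k).submatrix e e` with `e = tripleSwap12` (resp. `tripleRotate`).
lemma SepCut2.satisfiesBisepCriterion (h : SepCut2 ρ) :
    SatisfiesBisepCriterion X₁ Y₁ X₂ Y₂ X₃ Y₃ ρ := by
  obtain ⟨n, p, σ, τ, hp, -, hσ, hτ, rfl⟩ := h
  exact .sum_smul hp (fun k => ((hσ k).1.kronecker (hτ k).1).submatrix tripleSwap12)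
    fun k => satisfiesBisepCriterion_submatrix_tripleSwap12 (hσ k).1 (hτ k).1

lemma SepCut3.satisfiesBisepCriterion (h : SepCut3 ρ) :
    SatisfiesBisepCriterion X₁ Y₁ X₂ Y₂ X₃ Y₃ ρ := by
  obtain ⟨n, p, σ, τ, hp, -, hσ, hτ, rfl⟩ := h
  exact .sum_smul hp (fun k => ((hσ k).1.kronecker (hτ k).1).submatrix tripleRotate)
    fun k => satisfiesBisepCriterion_submatrix_tripleRotate (hσ k).1 (hτ k).1

lemma Biseparable.satisfiesBisepCriterion (h : Biseparable ρ) (X₁ Y₁ : Matrix (Fin d₁) (Fin d₁) ℂ)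
    (X₂ Y₂ : Matrix (Fin d₂) (Fin d₂) ℂ) (X₃ Y₃ : Matrix (Fin d₃) (Fin d₃) ℂ) :
    SatisfiesBisepCriterion X₁ Y₁ X₂ Y₂ X₃ Y₃ ρ := by
  obtain ⟨n, p, σ, hp, -, hσ, hcut, rfl⟩ := h
  refine .sum_smul hp (fun k => (hσ k).1) fun k => ?_
  rcases hcut k with h | h | h <;> exact h.satisfiesBisepCriterion

end Cuts

theorem biseparable_criterion_general {d₁ d₂ d₃ : ℕ}
    (ρ : Matrix (Fin d₁ × Fin d₂ × Fin d₃) (Fin d₁ × Fin d₂ × Fin d₃) ℂ)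
    (hbisep : Biseparable ρ)
    (X₁ Y₁ : Matrix (Fin d₁) (Fin d₁) ℂ) (X₂ Y₂ : Matrix (Fin d₂) (Fin d₂) ℂ)
    (X₃ Y₃ : Matrix (Fin d₃) (Fin d₃) ℂ) :
    ‖(((X₁ * Y₁) ⊗ₖ ((X₂ * Y₂) ⊗ₖ (X₃ * Y₃))) * ρ).trace‖ ≤
      Real.sqrt
        (((((X₁ * X₁ᴴ) ⊗ₖ ((Y₂ᴴ * Y₂) ⊗ₖ (Y₃ᴴ * Y₃))) * ρ).trace).re *
         ((((Y₁ᴴ * Y₁) ⊗ₖ ((X₂ * X₂ᴴ) ⊗ₖ (X₃ * X₃ᴴ))) * ρ).trace).re) +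
      Real.sqrt
        (((((Y₁ᴴ * Y₁) ⊗ₖ ((X₂ * X₂ᴴ) ⊗ₖ (Y₃ᴴ * Y₃))) * ρ).trace).re *
         ((((X₁ * X₁ᴴ) ⊗ₖ ((Y₂ᴴ * Y₂) ⊗ₖ (X₃ * X₃ᴴ))) * ρ).trace).re) +
      Real.sqrt
        (((((Y₁ᴴ * Y₁) ⊗ₖ ((Y₂ᴴ * Y₂) ⊗ₖ (X₃ * X₃ᴴ))) * ρ).trace).re *
         ((((X₁ * X₁ᴴ) ⊗ₖ ((X₂ * X₂ᴴ) ⊗ₖ (Y₃ᴴ * Y₃))) * ρ).trace).re) := by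
  have h := hbisep.satisfiesBisepCriterion X₁ Y₁ X₂ Y₂ X₃ Y₃
  simpa only [SatisfiesBisepCriterion, sumSqrtTraceMul, Fin.sum_univ_three, cutOp, cutFactor,
    Finset.mem_compl, Finset.mem_singleton, Fin.reduceEq, not_true_eq_false, not_false_eq_true,
    reduceIte] using h

/-- **The criterion for genuine multipartite entanglement (final inequality of
Sec. III E).**  For every biseparable tripartite state `ρ`:
`|⟨∏ₖ XₖYₖ⟩| ≤ √(T₁ T₂₃) + √(T₂ T₁₃) + √(T₃ T₁₂)`,
where `T_M = ⟨⊗ₖ O_k^M⟩` with `O_k^M = XₖXₖ†` for `k ∈ M` and `O_k^M = Yₖ†Yₖ` otherwise. -/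
theorem biseparable_criterion {d₁ d₂ d₃ : ℕ}
    (ρ : Matrix (Fin d₁ × Fin d₂ × Fin d₃) (Fin d₁ × Fin d₂ × Fin d₃) ℂ)
    (hρ : IsDensityMatrix ρ) (hbisep : Biseparable ρ)
    (X₁ Y₁ : Matrix (Fin d₁) (Fin d₁) ℂ) (X₂ Y₂ : Matrix (Fin d₂) (Fin d₂) ℂ)
    (X₃ Y₃ : Matrix (Fin d₃) (Fin d₃) ℂ) :
    ‖(((X₁ * Y₁) ⊗ₖ ((X₂ * Y₂) ⊗ₖ (X₃ * Y₃))) * ρ).trace‖ ≤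
      Real.sqrt
        (((((X₁ * X₁ᴴ) ⊗ₖ ((Y₂ᴴ * Y₂) ⊗ₖ (Y₃ᴴ * Y₃))) * ρ).trace).re *
         ((((Y₁ᴴ * Y₁) ⊗ₖ ((X₂ * X₂ᴴ) ⊗ₖ (X₃ * X₃ᴴ))) * ρ).trace).re) +
      Real.sqrt
        (((((Y₁ᴴ * Y₁) ⊗ₖ ((X₂ * X₂ᴴ) ⊗ₖ (Y₃ᴴ * Y₃))) * ρ).trace).re *
         ((((X₁ * X₁ᴴ) ⊗ₖ ((Y₂ᴴ * Y₂) ⊗ₖ (X₃ * X₃ᴴ))) * ρ).trace).re) +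
      Real.sqrt
        (((((Y₁ᴴ * Y₁) ⊗ₖ ((Y₂ᴴ * Y₂) ⊗ₖ (X₃ * X₃ᴴ))) * ρ).trace).re *
         ((((X₁ * X₁ᴴ) ⊗ₖ ((X₂ * X₂ᴴ) ⊗ₖ (Y₃ᴴ * Y₃))) * ρ).trace).re) :=
  biseparable_criterion_general ρ hbisep X₁ Y₁ X₂ Y₂ X₃ Y₃
end
end
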